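/- arXiv:1402.6134 — 3 statements merged into one kernel-verified Lean document; each statement's English description precedes it below -/
import Mathlib

section
/- Let (X,d) be a metric space and μ a Borel measure on X with 0 < μ(B(x,r)) < ∞ for every closed ball B(x,r), which is globally doubling: there is C_D ≥ 1 with μ(B(x,2r)) ≤ C_D μ(B(x,r)) for all x ∈ X and r > 0. Let E ⊆ X, q > 0 and C₀ > 0 be such that ∫_{B(x,r)} dist(y,E)^{−q} dμ(y) ≤ C₀ r^{−q} μ(B(x,r)) for every x ∈ E and all 0 < r < diam(E). Then there exist δ > 0 and C > 0, depending only on q, C₀ and C_D, such that ∫_{B(x,r)} dist(y,E)^{−(q+δ)} dμ(y) ≤ C r^{−(q+δ)} μ(B(x,r)) for every x ∈ E and all 0 < r < diam(E). -/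
/-!
Write `d = infEDist · E` and `F(t) = ∫_{B(x, r + 4t) ∩ {d < t}} d^{-q} dμ`. Cover `{d < ρ}` by
disjoint Vitali balls `B(z, ρ)` with `z ∈ E`. By Chebyshev's inequality the Aikawa bound on
`B(z, ρ)` forces at least half of its mass to lie where `d ≥ τρ` (for `C₀ τ^q ≤ 1/2`), and there
`d ≤ ρ`, so `μ(B(z, ρ)) ≲ ρ^q ∫_{B(z,ρ) ∩ {d ≥ τρ}} d^{-q}`. Together with the Aikawa bound at
scale `4ρ` and doubling this gives `F(ρ) ≤ K ∫_{τρ ≤ d ≤ ρ} d^{-q}`, and since that annulus and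
`{d < τρ}` are disjoint parts of `{d < 2ρ}`, Widman's hole-filling yields
`F(τρ) ≤ K/(K+1) F(2ρ)`. Thus `F` decays geometrically along `t_n = (τ/2)^n r/4`, starting from
`F(r/4) ≲ r^{-q} μ(B(x, r))`. On the layer `t_{n+1} ≤ d < t_n` we have
`d^{-(q+δ)} ≤ t_{n+1}^{-δ} d^{-q}`, and the resulting series converges once
`(τ/2)^{-δ} K/(K+1) < 1`.
-/

open MeasureTheory Metric ENNReal Filter Topology

theorem ENNReal.rpow_le_rpow_of_nonpos {x y : ℝ≥0∞} {z : ℝ} (hxy : x ≤ y) (hz : z ≤ 0) :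
    y ^ z ≤ x ^ z := by
  obtain ⟨w, rfl⟩ : ∃ w, z = -w := ⟨-z, (neg_neg z).symm⟩
  rw [ENNReal.rpow_neg, ENNReal.rpow_neg]
  exact ENNReal.inv_le_inv.mpr (ENNReal.rpow_le_rpow hxy (by linarith))

theorem exists_pos_le_one_mul_rpow_le {q : ℝ} (hq : 0 < q) (C : ℝ) :
    ∃ τ : ℝ, 0 < τ ∧ τ ≤ 1 ∧ C * τ ^ q ≤ 1 / 2 := by
  have hcont : Tendsto (fun τ : ℝ => C * τ ^ q) (𝓝[>] 0) (𝓝 0) := by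
    have := ((Real.continuousAt_rpow_const 0 q (Or.inr hq.le)).const_mul C).tendsto
    rw [Real.zero_rpow hq.ne', mul_zero] at this
    exact tendsto_nhdsWithin_of_tendsto_nhds this
  obtain ⟨τ, ⟨hτ, hτ1⟩, hCτ⟩ := ((eventually_mem_nhdsWithin.and
    (nhdsWithin_le_nhds (Iic_mem_nhds one_pos))).and
    (hcont.eventually (Iic_mem_nhds (by norm_num : (0:ℝ) < 1 / 2)))).exists
  exact ⟨τ, hτ, hτ1, hCτ⟩

theorem exists_pos_rpow_neg_mul_lt_one {κ θ : ℝ} (hκ : 0 < κ) (hθ : θ < 1) :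
    ∃ δ : ℝ, 0 < δ ∧ κ ^ (-δ) * θ < 1 := by
  have hcont : Tendsto (fun δ : ℝ => κ ^ (-δ) * θ) (𝓝[>] 0) (𝓝 θ) := by
    have : Continuous (fun δ : ℝ => κ ^ (-δ) * θ) :=
      ((Real.continuous_const_rpow hκ.ne').comp continuous_neg).mul continuous_const
    simpa using tendsto_nhdsWithin_of_tendsto_nhds (this.tendsto 0)
  obtain ⟨δ, hδ, hν⟩ := (eventually_mem_nhdsWithin.and (hcont.eventually (gt_mem_nhds hθ))).exists
  exact ⟨δ, hδ, hν⟩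

theorem exists_pow_succ_mul_le_lt {a t κ : ℝ} (ha : 0 < a) (hat : a < t) (hκ1 : κ < 1) :
    ∃ n : ℕ, κ ^ (n + 1) * t ≤ a ∧ a < κ ^ n * t := by
  classical
  have ht : 0 < t := ha.trans hat
  have hex : ∃ n : ℕ, κ ^ n * t ≤ a := by
    obtain ⟨n, hn⟩ := exists_pow_lt_of_lt_one (div_pos ha ht) hκ1
    exact ⟨n, ((lt_div_iff₀ ht).mp hn).le⟩
  have hn0 : Nat.find hex ≠ 0 := fun h => by
    have := Nat.find_spec hex
    rw [h, pow_zero, one_mul] at this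
    linarith
  obtain ⟨n, hn⟩ := Nat.exists_eq_succ_of_ne_zero hn0
  refine ⟨n, by simpa [hn] using Nat.find_spec hex, not_le.mp (Nat.find_min hex ?_)⟩
  omega

theorem le_ofReal_div_add_one_mul {a b c : ℝ≥0∞} {K : ℝ} (hK : 0 ≤ K)
    (hab : a ≤ ENNReal.ofReal K * b) (habc : a + b ≤ c) :
    a ≤ ENNReal.ofReal (K / (K + 1)) * c := by
  have hK1 : ENNReal.ofReal (K + 1) = ENNReal.ofReal K + 1 := by
    rw [ENNReal.ofReal_add hK zero_le_one, ENNReal.ofReal_one]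
  have h : a * ENNReal.ofReal (K + 1) ≤ ENNReal.ofReal K * c :=
    calc a * ENNReal.ofReal (K + 1) = a + ENNReal.ofReal K * a := by rw [hK1]; ring
      _ ≤ ENNReal.ofReal K * b + ENNReal.ofReal K * a := by gcongr
      _ = ENNReal.ofReal K * (a + b) := by ring
      _ ≤ ENNReal.ofReal K * c := by gcongr
  rw [ENNReal.ofReal_div_of_pos (by linarith), div_eq_mul_inv, mul_right_comm,
    ← div_eq_mul_inv]
  exact (ENNReal.le_div_iff_mul_le (Or.inl (ENNReal.ofReal_pos.mpr (by linarith)).ne')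
    (Or.inl ENNReal.ofReal_ne_top)).mpr h

/-- On the layer `κ ^ (n + 1) * t ≤ a < κ ^ n * t` we have `a ^ (-δ) ≤ (κ ^ (n + 1) * t) ^ (-δ)`;
at `a = 0` the `n = 0` term is already `⊤`. -/
theorem ENNReal.rpow_neg_add_le_add_tsum {a : ℝ≥0∞} {q δ t κ : ℝ} (hq : 0 < q) (hδ : 0 ≤ δ)
    (ht : 0 < t) (hκ0 : 0 < κ) (hκ1 : κ < 1) :
    a ^ (-(q + δ)) ≤ ENNReal.ofReal (t ^ (-(q + δ))) +
      ∑' n : ℕ, if a < ENNReal.ofReal (κ ^ n * t) then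
        ENNReal.ofReal ((κ ^ (n + 1) * t) ^ (-δ)) * a ^ (-q) else 0 := by
  rcases le_or_gt (ENNReal.ofReal t) a with hta | hat
  · refine le_add_right ?_
    rw [← ENNReal.ofReal_rpow_of_pos ht]
    exact ENNReal.rpow_le_rpow_of_nonpos hta (by linarith)
  refine le_add_left ?_
  rcases eq_or_ne a 0 with rfl | ha0
  · refine le_trans ?_ (ENNReal.le_tsum 0)
    have hpos : 0 < (κ ^ (0 + 1) * t) ^ (-δ) := by positivity
    rw [if_pos (by simpa using ht), ENNReal.zero_rpow_of_neg (neg_neg_of_pos hq),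
      ENNReal.mul_top (ENNReal.ofReal_pos.mpr hpos).ne']
    exact le_top
  have hatop : a ≠ ⊤ := (hat.trans ENNReal.ofReal_lt_top).ne
  obtain ⟨n, hlow, hup⟩ := exists_pow_succ_mul_le_lt (ENNReal.toReal_pos ha0 hatop)
    ((ENNReal.toReal_lt_toReal hatop ENNReal.ofReal_ne_top).mpr hat |>.trans_eq
      (ENNReal.toReal_ofReal ht.le)) hκ1
  refine le_trans ?_ (ENNReal.le_tsum n)
  have hup' : a < ENNReal.ofReal (κ ^ n * t) := by
    rwa [← ENNReal.ofReal_toReal hatop, ENNReal.ofReal_lt_ofReal_iff (by positivity)]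
  have hlow' : ENNReal.ofReal (κ ^ (n + 1) * t) ≤ a := by
    rwa [← ENNReal.ofReal_toReal hatop, ENNReal.ofReal_le_ofReal_iff ENNReal.toReal_nonneg]
  rw [if_pos hup', neg_add, ENNReal.rpow_add _ _ ha0 hatop, mul_comm (a ^ (-q)),
    ← ENNReal.ofReal_rpow_of_pos (by positivity)]
  exact mul_le_mul_left (ENNReal.rpow_le_rpow_of_nonpos hlow' (neg_nonpos.mpr hδ)) _

section LayerCake

variable {X : Type*} [MeasurableSpace X] {μ : Measure X} {f : X → ℝ≥0∞}

theorem setLIntegral_rpow_neg_add_le_tsum (hf : Measurable f) (s : Set X) {q δ t κ : ℝ}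
    (hq : 0 < q) (hδ : 0 ≤ δ) (ht : 0 < t) (hκ0 : 0 < κ) (hκ1 : κ < 1) :
    ∫⁻ y in s, f y ^ (-(q + δ)) ∂μ ≤ ENNReal.ofReal (t ^ (-(q + δ))) * μ s +
      ∑' n : ℕ, ENNReal.ofReal ((κ ^ (n + 1) * t) ^ (-δ)) *
        ∫⁻ y in s ∩ {y | f y < ENNReal.ofReal (κ ^ n * t)}, f y ^ (-q) ∂μ := by
  have hset : ∀ n : ℕ, MeasurableSet {y | f y < ENNReal.ofReal (κ ^ n * t)} :=
    fun n => measurableSet_lt hf measurable_const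
  calc ∫⁻ y in s, f y ^ (-(q + δ)) ∂μ
      ≤ ∫⁻ y in s, (ENNReal.ofReal (t ^ (-(q + δ))) + ∑' n : ℕ,
          {y | f y < ENNReal.ofReal (κ ^ n * t)}.indicator
            (fun y => ENNReal.ofReal ((κ ^ (n + 1) * t) ^ (-δ)) * f y ^ (-q)) y) ∂μ :=
        lintegral_mono fun y => (ENNReal.rpow_neg_add_le_add_tsum hq hδ ht hκ0 hκ1).trans_eq
          (by simp only [Set.indicator_apply, Set.mem_ofPred_eq])
    _ = _ := by
        rw [lintegral_add_left measurable_const, setLIntegral_const,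
          lintegral_tsum fun n => by
            exact ((measurable_const.mul (hf.pow_const _)).indicator (hset n)).aemeasurable]
        congr 1
        refine tsum_congr fun n => ?_
        rw [setLIntegral_indicator (hset n), lintegral_const_mul _ (hf.pow_const _),
          Set.inter_comm]

theorem setLIntegral_rpow_neg_add_le_of_decay (hf : Measurable f) (s : Set X)
    {q δ t κ θ M : ℝ} (hq : 0 < q) (hδ : 0 ≤ δ) (ht : 0 < t) (hκ0 : 0 < κ) (hκ1 : κ < 1)
    (hθ : 0 ≤ θ) (hν : κ ^ (-δ) * θ < 1) (hM : 0 ≤ M)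
    (hdecay : ∀ n : ℕ, ∫⁻ y in s ∩ {y | f y < ENNReal.ofReal (κ ^ n * t)}, f y ^ (-q) ∂μ ≤
      ENNReal.ofReal (θ ^ n * M * t ^ (-q)) * μ s) :
    ∫⁻ y in s, f y ^ (-(q + δ)) ∂μ ≤
      ENNReal.ofReal ((1 + κ ^ (-δ) * M / (1 - κ ^ (-δ) * θ)) * t ^ (-(q + δ))) * μ s := by
  set ν := κ ^ (-δ) * θ
  have hν0 : 0 ≤ ν := by positivity
  have hterm : ∀ n : ℕ, (κ ^ (n + 1) * t) ^ (-δ) * (θ ^ n * M * t ^ (-q)) =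
      ν ^ n * (κ ^ (-δ) * M * t ^ (-(q + δ))) := by
    intro n
    rw [Real.mul_rpow (by positivity) ht.le, ← Real.rpow_pow_comm hκ0.le, pow_succ,
      neg_add, Real.rpow_add ht, mul_pow]
    ring
  have hgeo : ∑' n : ℕ, ENNReal.ofReal (ν ^ n) = ENNReal.ofReal (1 - ν)⁻¹ := by
    rw [← ENNReal.ofReal_tsum_of_nonneg (fun n => pow_nonneg hν0 n)
      (summable_geometric_of_lt_one hν0 hν), tsum_geometric_of_lt_one hν0 hν]
  calc ∫⁻ y in s, f y ^ (-(q + δ)) ∂μ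
      ≤ ENNReal.ofReal (t ^ (-(q + δ))) * μ s +
          ∑' n : ℕ, ENNReal.ofReal ((κ ^ (n + 1) * t) ^ (-δ)) *
            (ENNReal.ofReal (θ ^ n * M * t ^ (-q)) * μ s) :=
        (setLIntegral_rpow_neg_add_le_tsum hf s hq hδ ht hκ0 hκ1).trans
          (by gcongr with n; exact hdecay n)
    _ = ENNReal.ofReal (t ^ (-(q + δ))) * μ s +
          (∑' n : ℕ, ENNReal.ofReal (ν ^ n)) * ENNReal.ofReal (κ ^ (-δ) * M * t ^ (-(q + δ))) *
            μ s := by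
        rw [← ENNReal.tsum_mul_right, ← ENNReal.tsum_mul_right]
        congr 1
        refine tsum_congr fun n => ?_
        rw [← mul_assoc, ← ENNReal.ofReal_mul (by positivity), hterm,
          ENNReal.ofReal_mul (pow_nonneg hν0 _)]
    _ = _ := by
        have hν1 : 0 < 1 - ν := by linarith
        rw [hgeo, ← ENNReal.ofReal_mul (inv_nonneg.mpr hν1.le), ← add_mul, ← ENNReal.ofReal_add
          (by positivity) (mul_nonneg (inv_nonneg.mpr hν1.le) (by positivity))]
        congr 2
        ring

end LayerCake

theorem measure_le_ofReal_rpow_mul_setLIntegral {X : Type*} [MeasurableSpace X] {μ : Measure X}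
    {f : X → ℝ≥0∞} (hf : Measurable f) {s : Set X} {a q : ℝ} (ha : 0 < a) (hq : 0 ≤ q)
    (hfs : ∀ y ∈ s, f y ≤ ENNReal.ofReal a) :
    μ s ≤ ENNReal.ofReal (a ^ q) * ∫⁻ y in s, f y ^ (-q) ∂μ := by
  have hone : ENNReal.ofReal (a ^ q) * ENNReal.ofReal a ^ (-q) = 1 := by
    rw [ENNReal.ofReal_rpow_of_pos ha, ← ENNReal.ofReal_mul (by positivity),
      Real.rpow_neg ha.le, mul_inv_cancel₀ (by positivity), ENNReal.ofReal_one]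
  calc μ s = ENNReal.ofReal (a ^ q) * ∫⁻ _ in s, ENNReal.ofReal a ^ (-q) ∂μ := by
        rw [setLIntegral_const, ← mul_assoc, hone, one_mul]
    _ ≤ ENNReal.ofReal (a ^ q) * ∫⁻ y in s, f y ^ (-q) ∂μ :=
        mul_le_mul_right (setLIntegral_mono (hf.pow_const _) fun y hy =>
          ENNReal.rpow_le_rpow_of_nonpos (hfs y hy) (neg_nonpos.mpr hq)) _

theorem Set.PairwiseDisjoint.countable_of_measure_pos {ι α : Type*} [MeasurableSpace α]
    {μ : Measure α} {u : Set ι} {B : ι → Set α} (hd : u.PairwiseDisjoint B)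
    (hB : ∀ i ∈ u, MeasurableSet (B i)) (hpos : ∀ i ∈ u, 0 < μ (B i))
    (hfin : μ (⋃ i ∈ u, B i) ≠ ⊤) : u.Countable := by
  have := Measure.countable_meas_pos_of_disjoint_of_meas_iUnion_ne_top μ
    (As := fun i : u => B i) (fun i => hB i i.2)
    (fun i j hij => hd i.2 j.2 (Subtype.coe_ne_coe.mpr hij))
    (by rwa [Set.biUnion_eq_iUnion] at hfin)
  have hall : {i : u | 0 < μ (B i)} = Set.univ := Set.eq_univ_of_forall fun i => hpos i i.2
  rw [hall, Set.countable_univ_iff] at this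
  exact Set.countable_coe_iff.mp this

section Aikawa

variable {X : Type*} [MetricSpace X] [MeasurableSpace X] {μ : Measure X}
  {E : Set X} {q C C_D : ℝ}

def AikawaUpTo (μ : Measure X) (E : Set X) (q C R : ℝ) : Prop :=
  ∀ z ∈ E, ∀ a : ℝ, 0 < a → a ≤ R →
    ∫⁻ y in closedBall z a, infEDist y E ^ (-q) ∂μ ≤
      ENNReal.ofReal (C * a ^ (-q)) * μ (closedBall z a)

theorem AikawaUpTo.mono {R R' : ℝ} (h : AikawaUpTo μ E q C R) (hR : R' ≤ R) :
    AikawaUpTo μ E q C R' :=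
  fun z hz a ha haR => h z hz a ha (haR.trans hR)

def IsDoublingWith (μ : Measure X) (C_D : ℝ) : Prop :=
  ∀ (x : X) (r : ℝ), 0 < r → μ (closedBall x (2 * r)) ≤ ENNReal.ofReal C_D * μ (closedBall x r)

theorem IsDoublingWith.measure_closedBall_four_mul_le (h : IsDoublingWith μ C_D) (x : X)
    {r : ℝ} (hr : 0 < r) :
    μ (closedBall x (4 * r)) ≤ ENNReal.ofReal C_D ^ 2 * μ (closedBall x r) :=
  calc μ (closedBall x (4 * r)) = μ (closedBall x (2 * (2 * r))) := by ring_nf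
    _ ≤ ENNReal.ofReal C_D * (ENNReal.ofReal C_D * μ (closedBall x r)) :=
        (h x _ (by positivity)).trans (by gcongr; exact h x r hr)
    _ = ENNReal.ofReal C_D ^ 2 * μ (closedBall x r) := by ring

theorem exists_countable_disjoint_closedBall_cover [BorelSpace X]
    (hvol : ∀ (x : X) (r : ℝ), 0 < r → 0 < μ (closedBall x r) ∧ μ (closedBall x r) < ⊤)
    (E : Set X) (x : X) {ρ R : ℝ} (hρ : 0 < ρ) (hR : 0 ≤ R) :
    ∃ u ⊆ E, u.Countable ∧ u.PairwiseDisjoint (fun z => closedBall z ρ) ∧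
      (∀ z ∈ u, closedBall z ρ ⊆ closedBall x (R + 2 * ρ)) ∧
      closedBall x R ∩ thickening ρ E ⊆ ⋃ z ∈ u, closedBall z (4 * ρ) := by
  obtain ⟨u, hu, hdisj, hcover⟩ :=
    Vitali.exists_disjoint_subfamily_covering_enlargement_closedBall
      (E ∩ closedBall x (R + ρ)) id (fun _ => ρ) ρ (fun _ _ => le_rfl) 4 (by norm_num)
  have hsub : ∀ z ∈ u, closedBall z ρ ⊆ closedBall x (R + 2 * ρ) := by
    intro z hz
    have := mem_closedBall.mp (hu hz).2
    exact closedBall_subset_closedBall' (by linarith)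
  refine ⟨u, fun z hz => (hu hz).1, ?_, hdisj, hsub, ?_⟩
  · refine hdisj.countable_of_measure_pos (fun _ _ => measurableSet_closedBall)
      (fun z _ => (hvol z ρ hρ).1)
      (ne_top_of_le_ne_top (hvol x (R + 2 * ρ) (by linarith)).2.ne ?_)
    exact measure_mono (Set.iUnion₂_subset hsub)
  · rintro y ⟨hyx, hyE⟩
    obtain ⟨z, hzE, hyz⟩ := mem_thickening_iff.mp hyE
    have hzx : z ∈ closedBall x (R + ρ) := by
      rw [mem_closedBall] at hyx ⊢
      linarith [dist_triangle z y x, dist_comm z y]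
    obtain ⟨w, hwu, hzw⟩ := hcover z ⟨hzE, hzx⟩
    exact Set.mem_biUnion hwu (by simpa [mul_comm] using hzw (mem_closedBall.mpr hyz.le))

theorem setLIntegral_le_tsum_measure_closedBall (hdbl : IsDoublingWith μ C_D) (hCD : 0 ≤ C_D)
    (hC : 0 ≤ C) (hq : 0 ≤ q) {ρ : ℝ} (hρ : 0 < ρ) (hA : AikawaUpTo μ E q C (4 * ρ))
    {u s : Set X} (hu : u.Countable) (huE : u ⊆ E) (hs : s ⊆ ⋃ z ∈ u, closedBall z (4 * ρ)) :
    ∫⁻ y in s, infEDist y E ^ (-q) ∂μ ≤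
      ENNReal.ofReal (C * C_D ^ 2 * ρ ^ (-q)) * ∑' z : u, μ (closedBall (z : X) ρ) := by
  have : Countable u := hu.to_subtype
  have hball : ∀ z : u, ∫⁻ y in closedBall (z : X) (4 * ρ), infEDist y E ^ (-q) ∂μ ≤
      ENNReal.ofReal (C * C_D ^ 2 * ρ ^ (-q)) * μ (closedBall (z : X) ρ) := fun z =>
    calc ∫⁻ y in closedBall (z : X) (4 * ρ), infEDist y E ^ (-q) ∂μ
        ≤ ENNReal.ofReal (C * (4 * ρ) ^ (-q)) * μ (closedBall (z : X) (4 * ρ)) :=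
          hA z (huE z.2) _ (by positivity) le_rfl
      _ ≤ ENNReal.ofReal (C * ρ ^ (-q)) *
            (ENNReal.ofReal C_D ^ 2 * μ (closedBall (z : X) ρ)) := by
          refine mul_le_mul' (ENNReal.ofReal_le_ofReal (mul_le_mul_of_nonneg_left ?_ hC))
            (hdbl.measure_closedBall_four_mul_le _ hρ)
          exact Real.rpow_le_rpow_of_nonpos hρ (by linarith) (neg_nonpos.mpr hq)
      _ = ENNReal.ofReal (C * C_D ^ 2 * ρ ^ (-q)) * μ (closedBall (z : X) ρ) := by
          rw [← ENNReal.ofReal_pow hCD, ← mul_assoc, ← ENNReal.ofReal_mul (by positivity)]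
          ring_nf
  calc ∫⁻ y in s, infEDist y E ^ (-q) ∂μ
      ≤ ∫⁻ y in ⋃ z : u, closedBall (z : X) (4 * ρ), infEDist y E ^ (-q) ∂μ :=
        lintegral_mono_set (by rwa [Set.biUnion_eq_iUnion] at hs)
    _ ≤ ∑' z : u, ∫⁻ y in closedBall (z : X) (4 * ρ), infEDist y E ^ (-q) ∂μ :=
        lintegral_iUnion_le _ _
    _ ≤ _ := by
        rw [← ENNReal.tsum_mul_left]
        exact ENNReal.tsum_le_tsum hball

theorem measure_closedBall_inter_thickening_le [BorelSpace X] {z : X} {ρ τ : ℝ} (hρ : 0 < ρ)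
    (hτ : 0 < τ) (hq : 0 ≤ q) (hCτ : C * τ ^ q ≤ 1 / 2)
    (hAz : ∫⁻ y in closedBall z ρ, infEDist y E ^ (-q) ∂μ ≤
      ENNReal.ofReal (C * ρ ^ (-q)) * μ (closedBall z ρ)) :
    μ (closedBall z ρ ∩ thickening (τ * ρ) E) ≤ μ (closedBall z ρ) / 2 := by
  have hτρ : 0 < τ * ρ := mul_pos hτ hρ
  calc μ (closedBall z ρ ∩ thickening (τ * ρ) E)
      ≤ ENNReal.ofReal ((τ * ρ) ^ q) *
          ∫⁻ y in closedBall z ρ ∩ thickening (τ * ρ) E, infEDist y E ^ (-q) ∂μ :=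
        measure_le_ofReal_rpow_mul_setLIntegral measurable_infEDist hτρ hq fun y hy => hy.2.le
    _ ≤ ENNReal.ofReal ((τ * ρ) ^ q) * (ENNReal.ofReal (C * ρ ^ (-q)) * μ (closedBall z ρ)) :=
        mul_le_mul_right ((lintegral_mono_set Set.inter_subset_left).trans hAz) _
    _ = ENNReal.ofReal (C * τ ^ q) * μ (closedBall z ρ) := by
        rw [← mul_assoc, ← ENNReal.ofReal_mul (by positivity), Real.mul_rpow hτ.le hρ.le,
          Real.rpow_neg hρ.le]
        congr 2
        field_simp
    _ ≤ μ (closedBall z ρ) / 2 := by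
        rw [ENNReal.div_eq_inv_mul]
        gcongr
        rw [← ENNReal.ofReal_ofNat 2, ← ENNReal.ofReal_inv_of_pos two_pos]
        exact ENNReal.ofReal_le_ofReal (by linarith)

theorem measure_closedBall_le_two_mul_setLIntegral_diff [BorelSpace X] {z : X} {ρ τ : ℝ}
    (hz : z ∈ E) (hρ : 0 < ρ) (hfin : μ (closedBall z ρ) ≠ ⊤) (hτ : 0 < τ) (hq : 0 ≤ q)
    (hCτ : C * τ ^ q ≤ 1 / 2)
    (hAz : ∫⁻ y in closedBall z ρ, infEDist y E ^ (-q) ∂μ ≤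
      ENNReal.ofReal (C * ρ ^ (-q)) * μ (closedBall z ρ)) :
    μ (closedBall z ρ) ≤
      2 * ENNReal.ofReal (ρ ^ q) *
        ∫⁻ y in closedBall z ρ \ thickening (τ * ρ) E, infEDist y E ^ (-q) ∂μ := by
  have hhalf : μ (closedBall z ρ) / 2 ≤ μ (closedBall z ρ \ thickening (τ * ρ) E) := by
    rw [← ENNReal.sub_half hfin, tsub_le_iff_right]
    calc μ (closedBall z ρ)
        ≤ μ (closedBall z ρ ∩ thickening (τ * ρ) E) + μ (closedBall z ρ \ thickening (τ * ρ) E) :=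
          measure_le_inter_add_sdiff _ _ _
      _ ≤ μ (closedBall z ρ \ thickening (τ * ρ) E) + μ (closedBall z ρ) / 2 := by
          rw [add_comm]
          gcongr
          exact measure_closedBall_inter_thickening_le hρ hτ hq hCτ hAz
  calc μ (closedBall z ρ) = 2 * (μ (closedBall z ρ) / 2) :=
        (ENNReal.mul_div_cancel two_ne_zero ofNat_ne_top).symm
    _ ≤ 2 * μ (closedBall z ρ \ thickening (τ * ρ) E) := mul_le_mul_right hhalf _
    _ ≤ _ := by
        rw [mul_assoc]
        refine mul_le_mul_right (measure_le_ofReal_rpow_mul_setLIntegral measurable_infEDist hρ hq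
          fun y hy => closedBall_subset_cthickening hz ρ hy.1) _

theorem setLIntegral_inter_thickening_le_annulus [BorelSpace X]
    (hvol : ∀ (x : X) (r : ℝ), 0 < r → 0 < μ (closedBall x r) ∧ μ (closedBall x r) < ⊤)
    (hdbl : IsDoublingWith μ C_D) (hCD : 0 ≤ C_D) (hC : 0 ≤ C) (hq : 0 ≤ q) {ρ τ R : ℝ}
    (hρ : 0 < ρ) (hτ : 0 < τ) (hCτ : C * τ ^ q ≤ 1 / 2) (hA : AikawaUpTo μ E q C (4 * ρ))
    (hR : 0 ≤ R) (x : X) :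
    ∫⁻ y in closedBall x R ∩ thickening ρ E, infEDist y E ^ (-q) ∂μ ≤
      ENNReal.ofReal (2 * C * C_D ^ 2) *
        ∫⁻ y in (closedBall x (R + 2 * ρ) ∩ cthickening ρ E) \ thickening (τ * ρ) E,
          infEDist y E ^ (-q) ∂μ := by
  obtain ⟨u, huE, hu, hdisj, hsub, hcover⟩ :=
    exists_countable_disjoint_closedBall_cover hvol E x hρ hR
  have : Countable u := hu.to_subtype
  set G : X → Set X := fun z => closedBall z ρ \ thickening (τ * ρ) E
  have hGdisj : Pairwise (Function.onFun Disjoint fun z : u => G z) := fun z w hzw =>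
    (hdisj z.2 w.2 (Subtype.coe_ne_coe.mpr hzw)).mono Set.sdiff_subset Set.sdiff_subset
  have hGsub : (⋃ z : u, G z) ⊆
      (closedBall x (R + 2 * ρ) ∩ cthickening ρ E) \ thickening (τ * ρ) E :=
    Set.iUnion_subset fun z y hy =>
      ⟨⟨hsub z z.2 hy.1, closedBall_subset_cthickening (huE z.2) ρ hy.1⟩, hy.2⟩
  have hρq : ρ ^ (-q) * ρ ^ q = 1 := by
    rw [Real.rpow_neg hρ.le, inv_mul_cancel₀ (by positivity)]
  calc ∫⁻ y in closedBall x R ∩ thickening ρ E, infEDist y E ^ (-q) ∂μ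
      ≤ ENNReal.ofReal (C * C_D ^ 2 * ρ ^ (-q)) * ∑' z : u, μ (closedBall (z : X) ρ) :=
        setLIntegral_le_tsum_measure_closedBall hdbl hCD hC hq hρ hA hu huE hcover
    _ ≤ ENNReal.ofReal (C * C_D ^ 2 * ρ ^ (-q)) *
          ∑' z : u, 2 * ENNReal.ofReal (ρ ^ q) * ∫⁻ y in G z, infEDist y E ^ (-q) ∂μ := by
        gcongr with z
        exact measure_closedBall_le_two_mul_setLIntegral_diff (huE z.2) hρ
          (hvol _ ρ hρ).2.ne hτ hq hCτ (hA z (huE z.2) ρ hρ (by linarith))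
    _ = ENNReal.ofReal (C * C_D ^ 2 * ρ ^ (-q)) * (2 * ENNReal.ofReal (ρ ^ q)) *
          ∫⁻ y in ⋃ z : u, G z, infEDist y E ^ (-q) ∂μ := by
        rw [ENNReal.tsum_mul_left, ← mul_assoc,
          lintegral_iUnion (fun z => measurableSet_closedBall.diff isOpen_thickening.measurableSet)
            hGdisj]
    _ ≤ _ := by
        have hconst : ENNReal.ofReal (C * C_D ^ 2 * ρ ^ (-q)) * (2 * ENNReal.ofReal (ρ ^ q)) =
            ENNReal.ofReal (2 * C * C_D ^ 2) := by
          rw [← ENNReal.ofReal_ofNat 2, ← ENNReal.ofReal_mul zero_le_two,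
            ← ENNReal.ofReal_mul (by positivity)]
          congr 1
          linear_combination (2 * C * C_D ^ 2) * hρq
        rw [hconst]
        exact mul_le_mul_right (lintegral_mono_set hGsub) _

theorem setLIntegral_inter_thickening_mul_le [BorelSpace X]
    (hvol : ∀ (x : X) (r : ℝ), 0 < r → 0 < μ (closedBall x r) ∧ μ (closedBall x r) < ⊤)
    (hdbl : IsDoublingWith μ C_D) (hCD : 0 ≤ C_D) (hC : 0 ≤ C) (hq : 0 ≤ q) {τ t c : ℝ}
    (hτ0 : 0 < τ) (hτ1 : τ ≤ 1) (hCτ : C * τ ^ q ≤ 1 / 2) (ht : 0 < t)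
    (hA : AikawaUpTo μ E q C (2 * t)) (hc : 0 ≤ c) (x : X) :
    ∫⁻ y in closedBall x (c + 4 * (τ / 2 * t)) ∩ thickening (τ / 2 * t) E,
        infEDist y E ^ (-q) ∂μ ≤
      ENNReal.ofReal (2 * C * C_D ^ 2 / (2 * C * C_D ^ 2 + 1)) *
        ∫⁻ y in closedBall x (c + 4 * t) ∩ thickening t E, infEDist y E ^ (-q) ∂μ := by
  rw [show τ / 2 * t = τ * (t / 2) by ring]
  have ht2 : 0 < t / 2 := half_pos ht
  have hτt : τ * (t / 2) ≤ t / 2 := mul_le_of_le_one_left ht2.le hτ1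
  set annulus := (closedBall x (c + 4 * (t / 2) + 2 * (t / 2)) ∩ cthickening (t / 2) E) \
    thickening (τ * (t / 2)) E
  refine le_ofReal_div_add_one_mul (b := ∫⁻ y in annulus, infEDist y E ^ (-q) ∂μ)
    (by positivity) ?_ ?_
  · refine (lintegral_mono_set (Set.inter_subset_inter (closedBall_subset_closedBall
      (by linarith : c + 4 * (τ * (t / 2)) ≤ c + 4 * (t / 2))) (thickening_mono hτt E))).trans ?_
    exact setLIntegral_inter_thickening_le_annulus hvol hdbl hCD hC hq ht2 hτ0 hCτ
      (hA.mono (by linarith)) (by linarith) x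
  · have hdisj : Disjoint (closedBall x (c + 4 * (τ * (t / 2))) ∩ thickening (τ * (t / 2)) E)
        annulus :=
      Set.disjoint_left.mpr fun y hy hy' => hy'.2 hy.2
    rw [← lintegral_union ((measurableSet_closedBall.inter
      isClosed_cthickening.measurableSet).diff isOpen_thickening.measurableSet) hdisj]
    refine lintegral_mono_set (Set.union_subset ?_ ?_)
    · exact Set.inter_subset_inter (closedBall_subset_closedBall (by linarith))
        (thickening_mono (by linarith) E)
    · exact Set.sdiff_subset.trans (Set.inter_subset_inter
        (closedBall_subset_closedBall (by linarith))
        (cthickening_subset_thickening' ht (by linarith) E))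

theorem setLIntegral_inter_thickening_pow_mul_le [BorelSpace X]
    (hvol : ∀ (x : X) (r : ℝ), 0 < r → 0 < μ (closedBall x r) ∧ μ (closedBall x r) < ⊤)
    (hdbl : IsDoublingWith μ C_D) (hCD : 0 ≤ C_D) (hC : 0 ≤ C) (hq : 0 ≤ q) {τ t c : ℝ}
    (hτ0 : 0 < τ) (hτ1 : τ ≤ 1) (hCτ : C * τ ^ q ≤ 1 / 2) (ht : 0 < t)
    (hA : AikawaUpTo μ E q C (2 * t)) (hc : 0 ≤ c) (x : X) (n : ℕ) :
    ∫⁻ y in closedBall x (c + 4 * ((τ / 2) ^ n * t)) ∩ thickening ((τ / 2) ^ n * t) E,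
        infEDist y E ^ (-q) ∂μ ≤
      ENNReal.ofReal ((2 * C * C_D ^ 2 / (2 * C * C_D ^ 2 + 1)) ^ n) *
        ∫⁻ y in closedBall x (c + 4 * t) ∩ thickening t E, infEDist y E ^ (-q) ∂μ := by
  induction n with
  | zero => simp
  | succ n ih =>
    have hκn : (τ / 2) ^ n ≤ 1 := pow_le_one₀ (by positivity) (by linarith)
    rw [pow_succ', mul_assoc, pow_succ', ENNReal.ofReal_mul (by positivity), mul_assoc]
    refine (setLIntegral_inter_thickening_mul_le hvol hdbl hCD hC hq hτ0 hτ1 hCτ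
      (by positivity) (hA.mono ?_) hc x).trans (mul_le_mul_right ih _)
    nlinarith

theorem setLIntegral_inter_thickening_quarter_le [BorelSpace X]
    (hvol : ∀ (x : X) (r : ℝ), 0 < r → 0 < μ (closedBall x r) ∧ μ (closedBall x r) < ⊤)
    (hdbl : IsDoublingWith μ C_D) (hCD : 0 ≤ C_D) (hC : 0 ≤ C) (hq : 0 ≤ q) {r : ℝ}
    (hr : 0 < r) (hA : AikawaUpTo μ E q C r) (x : X) :
    ∫⁻ y in closedBall x (r + 4 * (r / 4)) ∩ thickening (r / 4) E, infEDist y E ^ (-q) ∂μ ≤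
      ENNReal.ofReal (C * C_D ^ 4 * (r / 4) ^ (-q)) * μ (closedBall x r) := by
  obtain ⟨u, huE, hu, hdisj, hsub, hcover⟩ :=
    exists_countable_disjoint_closedBall_cover hvol E x (ρ := r / 4) (R := r + 4 * (r / 4))
      (by positivity) (by positivity)
  have hunion :
      μ (⋃ z ∈ u, closedBall z (r / 4)) ≤ ENNReal.ofReal C_D ^ 2 * μ (closedBall x r) :=
    (measure_mono (Set.iUnion₂_subset fun z hz =>
      (hsub z hz).trans (closedBall_subset_closedBall (by linarith)))).trans
      (hdbl.measure_closedBall_four_mul_le x hr)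
  calc ∫⁻ y in closedBall x (r + 4 * (r / 4)) ∩ thickening (r / 4) E, infEDist y E ^ (-q) ∂μ
      ≤ ENNReal.ofReal (C * C_D ^ 2 * (r / 4) ^ (-q)) *
          ∑' z : u, μ (closedBall (z : X) (r / 4)) :=
        setLIntegral_le_tsum_measure_closedBall hdbl hCD hC hq (by positivity)
          (hA.mono (by linarith)) hu huE hcover
    _ ≤ ENNReal.ofReal (C * C_D ^ 2 * (r / 4) ^ (-q)) *
          (ENNReal.ofReal C_D ^ 2 * μ (closedBall x r)) := by
        rw [← measure_biUnion hu hdisj fun _ _ => measurableSet_closedBall]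
        exact mul_le_mul_right hunion _
    _ = ENNReal.ofReal (C * C_D ^ 4 * (r / 4) ^ (-q)) * μ (closedBall x r) := by
        rw [← ENNReal.ofReal_pow hCD, ← mul_assoc, ← ENNReal.ofReal_mul (by positivity)]
        ring_nf

theorem setLIntegral_closedBall_inter_thickening_le [BorelSpace X]
    (hvol : ∀ (x : X) (r : ℝ), 0 < r → 0 < μ (closedBall x r) ∧ μ (closedBall x r) < ⊤)
    (hdbl : IsDoublingWith μ C_D) (hCD : 0 ≤ C_D) (hC : 0 ≤ C) (hq : 0 ≤ q) {τ r : ℝ}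
    (hτ0 : 0 < τ) (hτ1 : τ ≤ 1) (hCτ : C * τ ^ q ≤ 1 / 2) (hr : 0 < r)
    (hA : AikawaUpTo μ E q C r) (x : X) (n : ℕ) :
    ∫⁻ y in closedBall x r ∩ thickening ((τ / 2) ^ n * (r / 4)) E, infEDist y E ^ (-q) ∂μ ≤
      ENNReal.ofReal ((2 * C * C_D ^ 2 / (2 * C * C_D ^ 2 + 1)) ^ n * (C * C_D ^ 4) *
        (r / 4) ^ (-q)) * μ (closedBall x r) :=
  calc _ ≤ ∫⁻ y in closedBall x (r + 4 * ((τ / 2) ^ n * (r / 4))) ∩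
          thickening ((τ / 2) ^ n * (r / 4)) E, infEDist y E ^ (-q) ∂μ :=
        lintegral_mono_set (Set.inter_subset_inter_left _
          (closedBall_subset_closedBall (le_add_of_nonneg_right (by positivity))))
    _ ≤ ENNReal.ofReal ((2 * C * C_D ^ 2 / (2 * C * C_D ^ 2 + 1)) ^ n) *
          (ENNReal.ofReal (C * C_D ^ 4 * (r / 4) ^ (-q)) * μ (closedBall x r)) :=
        (setLIntegral_inter_thickening_pow_mul_le hvol hdbl hCD hC hq hτ0 hτ1 hCτ
          (by positivity) (hA.mono (by linarith)) hr.le x n).trans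
        (mul_le_mul_right (setLIntegral_inter_thickening_quarter_le hvol hdbl hCD hC hq hr hA x) _)
    _ = _ := by rw [← mul_assoc, ← ENNReal.ofReal_mul (by positivity)]; ring_nf

end Aikawa

/-- (Lemma 2.1 of the paper.) Self-improvement of the Aikawa condition:
if `E ⊆ X` satisfies the Aikawa condition with exponent `q > 0` and constant `C₀` for a
globally doubling Borel measure `μ`, then it satisfies it with some exponent `q + δ`,
`δ > 0`. -/
theorem aikawa_self_improvement
    {X : Type*} [MetricSpace X] [MeasurableSpace X] [BorelSpace X]
    (μ : Measure X)
    (hvol : ∀ (x : X) (r : ℝ), 0 < r →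
      0 < μ (Metric.closedBall x r) ∧ μ (Metric.closedBall x r) < ⊤)
    (C_D : ℝ) (hCD : 1 ≤ C_D)
    (hdbl : ∀ (x : X) (r : ℝ), 0 < r →
      μ (Metric.closedBall x (2 * r)) ≤ ENNReal.ofReal C_D * μ (Metric.closedBall x r))
    (E : Set X) (q C₀ : ℝ) (hq : 0 < q) (hC₀ : 0 < C₀)
    (hA : ∀ x ∈ E, ∀ r : ℝ, 0 < r → ENNReal.ofReal r < EMetric.diam E →
      ∫⁻ y in Metric.closedBall x r, (EMetric.infEdist y E) ^ (-q) ∂μ ≤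
        ENNReal.ofReal (C₀ * r ^ (-q)) * μ (Metric.closedBall x r)) :
    ∃ δ : ℝ, 0 < δ ∧ ∃ C : ℝ, 0 < C ∧
      ∀ x ∈ E, ∀ r : ℝ, 0 < r → ENNReal.ofReal r < EMetric.diam E →
        ∫⁻ y in Metric.closedBall x r, (EMetric.infEdist y E) ^ (-(q + δ)) ∂μ ≤
          ENNReal.ofReal (C * r ^ (-(q + δ))) * μ (Metric.closedBall x r) := by
  obtain ⟨τ, hτ0, hτ1, hCτ⟩ := exists_pos_le_one_mul_rpow_le hq C₀
  set K := 2 * C₀ * C_D ^ 2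
  have hCD0 : 0 ≤ C_D := by linarith
  have hK : 0 ≤ K := by positivity
  have hθ : K / (K + 1) < 1 := (div_lt_one (by linarith)).mpr (by linarith)
  obtain ⟨δ, hδ, hν⟩ := exists_pos_rpow_neg_mul_lt_one (half_pos hτ0) hθ
  have hν0 : 0 < 1 - (τ / 2) ^ (-δ) * (K / (K + 1)) := sub_pos.mpr hν
  refine ⟨δ, hδ, (1 + (τ / 2) ^ (-δ) * (C₀ * C_D ^ 4) / (1 - (τ / 2) ^ (-δ) * (K / (K + 1)))) *
    4 ^ (q + δ), by positivity, fun x _ r hr hrd => ?_⟩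
  have hAr : AikawaUpTo μ E q C₀ r := fun z hz a ha har =>
    hA z hz a ha ((ENNReal.ofReal_le_ofReal har).trans_lt hrd)
  calc _ ≤ ENNReal.ofReal ((1 + (τ / 2) ^ (-δ) * (C₀ * C_D ^ 4) /
          (1 - (τ / 2) ^ (-δ) * (K / (K + 1)))) * (r / 4) ^ (-(q + δ))) * μ (closedBall x r) :=
        setLIntegral_rpow_neg_add_le_of_decay measurable_infEDist _ hq hδ.le (by positivity)
          (half_pos hτ0) (by linarith) (by positivity) hν (by positivity)
          (setLIntegral_closedBall_inter_thickening_le hvol hdbl hCD0 hC₀.le hq.le hτ0 hτ1 hCτ hr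
            hAr x)
    _ = _ := by
        rw [Real.div_rpow hr.le zero_le_four, Real.rpow_neg zero_le_four, div_inv_eq_mul]
        ring_nf
end

section
/- Let (X,d) be a complete metric space and μ a Borel measure on X with 0 < μ(B(x,r)) < ∞ for every closed ball B(x,r), which is globally doubling: there is C_D ≥ 1 with μ(B(x,2r)) ≤ C_D μ(B(x,r)) for all x ∈ X and r > 0. Let E ⊆ X be a closed set and q > 0, and assume that the upper Assouad codimension of E is less than q, i.e. there exist 0 ≤ s < q and c₀ > 0 such that μ(E_r ∩ B(x,R)) ≥ c₀ (r/R)^s μ(B(x,R)) for every x ∈ E and all 0 < r < R < diam(E). Then there exists a constant C > 0 such that for every w ∈ E, every 0 < R < diam(E), and every countable family of closed balls B(z_i, r_i) with 0 < r_i ≤ R whose union covers E ∩ B(w,R), one has ∑_i r_i^{−q} μ(B(z_i,r_i)) ≥ C R^{−q} μ(B(w,R)). -/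
/-!
Countable covers reduce to finite ones: doubling bounds the number of separated points in a ball,
so closed balls are totally bounded and `E ∩ B(w, R)` is compact.

A finite cover is handled by induction on the ratio between `R` and the smallest radius, with
`r = R / 2 ^ a` for a large fixed `a`. If a ball of radius `≥ r` meets `B(w, R)`, then `B(w, R)`
sits in a fixed dilate of it and that single ball already carries the content. Otherwise pick a
maximal `4 r`-separated set `M` in `E` near `w`. The balls `B(e, 8 r)`, `e ∈ M`, cover the
`r`-thickening of `E` near `w`, so the codimension bound gives
`(r / R) ^ s μ(B(w, R)) ≲ ∑ μ(B(e, r))`. The cover balls meeting the various `B(e, r)` are small,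
hence form disjoint subfamilies, and the induction hypothesis applies to each of them at scale `r`.
Passing from scale `R` to `r` gains a factor `(R / r) ^ (q - s) = 2 ^ (a (q - s))`, which beats
the doubling constants once `a` is large, because `s < q`.
-/

open MeasureTheory Metric ENNReal

open scoped NNReal

section

variable {X : Type*} [PseudoMetricSpace X]

theorem isSeparated_coe_iff {ε : ℝ≥0} {s : Set X} :
    IsSeparated ε s ↔ s.Pairwise fun y y' => (ε : ℝ) < dist y y' := by
  simp only [IsSeparated, edist_nndist, ENNReal.coe_lt_coe, ← NNReal.coe_lt_coe, coe_nndist]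

open Classical in
noncomputable def ballsMeeting {ι : Type*} (G : Finset ι) (z : ι → X) (ρ : ι → ℝ) (x : X)
    (r : ℝ) : Finset ι :=
  G.filter fun i => (closedBall (z i) (ρ i) ∩ closedBall x r).Nonempty

theorem mem_ballsMeeting {ι : Type*} {G : Finset ι} {z : ι → X} {ρ : ι → ℝ} {x : X} {r : ℝ}
    {i : ι} : i ∈ ballsMeeting G z ρ x r ↔
      i ∈ G ∧ (closedBall (z i) (ρ i) ∩ closedBall x r).Nonempty := by
  classical
  simp [ballsMeeting]

theorem inter_closedBall_subset_biUnion_ballsMeeting {ι : Type*} {G : Finset ι} {z : ι → X}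
    {ρ : ι → ℝ} {S : Set X} {x : X} {r : ℝ}
    (hS : S ∩ closedBall x r ⊆ ⋃ i ∈ G, closedBall (z i) (ρ i)) :
    S ∩ closedBall x r ⊆ ⋃ i ∈ ballsMeeting G z ρ x r, closedBall (z i) (ρ i) := by
  rintro y ⟨hyS, hyx⟩
  obtain ⟨i, hi, hyi⟩ := Set.mem_iUnion₂.1 (hS ⟨hyS, hyx⟩)
  exact Set.mem_iUnion₂.2 ⟨i, mem_ballsMeeting.2 ⟨hi, y, hyi, hyx⟩, hyi⟩

/-- Two `4 r`-separated balls of radius `r` meet no common ball of radius `< r`, so the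
families `ballsMeeting G z ρ e r`, `e ∈ M`, are disjoint subfamilies of `G`. -/
theorem sum_sum_ballsMeeting_le {ι : Type*} {G : Finset ι} {z : ι → X} {ρ : ι → ℝ}
    {M : Finset X} {r : ℝ} (hM : (M : Set X).Pairwise fun e e' => 4 * r < dist e e')
    (hsmall : ∀ i ∈ G, ∀ e ∈ M, (closedBall (z i) (ρ i) ∩ closedBall e r).Nonempty → ρ i < r)
    (f : ι → ℝ≥0∞) :
    ∑ e ∈ M, ∑ i ∈ ballsMeeting G z ρ e r, f i ≤ ∑ i ∈ G, f i := by
  classical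
  have hdisj : (M : Set X).PairwiseDisjoint fun e => ballsMeeting G z ρ e r := by
    intro e he e' he' hne
    refine Finset.disjoint_left.2 fun i hi hi' => ?_
    obtain ⟨hiG, p, hpi, hpe⟩ := mem_ballsMeeting.1 hi
    obtain ⟨-, p', hpi', hpe'⟩ := mem_ballsMeeting.1 hi'
    have := hsmall i hiG e he ⟨p, hpi, hpe⟩
    linarith [hM he he' hne, dist_triangle4 e p p' e', dist_triangle p (z i) p',
      dist_comm e p, dist_comm (z i) p', mem_closedBall.1 hpi, mem_closedBall.1 hpi',
      mem_closedBall.1 hpe, mem_closedBall.1 hpe']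
  rw [← Finset.sum_biUnion hdisj]
  exact Finset.sum_le_sum_of_subset
    (Finset.biUnion_subset.2 fun e _ i hi => (mem_ballsMeeting.1 hi).1)

theorem IsCompact.exists_finset_subset_biUnion_closedBall_two_mul {ι : Type*} {S : Set X}
    (hS : IsCompact S) {z : ι → X} {ρ : ι → ℝ} (hρ : ∀ i, 0 < ρ i)
    (hcover : S ⊆ ⋃ i, closedBall (z i) (ρ i)) :
    ∃ G : Finset ι, S ⊆ ⋃ i ∈ G, closedBall (z i) (2 * ρ i) := by
  obtain ⟨G, hG⟩ := hS.elim_finite_subcover (fun i => ball (z i) (2 * ρ i)) (fun _ => isOpen_ball)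
    (hcover.trans (Set.iUnion_mono fun i => closedBall_subset_ball (by linarith [hρ i])))
  exact ⟨G, hG.trans (Set.iUnion₂_mono fun i _ => ball_subset_closedBall)⟩

theorem four_mul_div_two_pow_le {R : ℝ} (hR : 0 ≤ R) {a : ℕ} (ha : 2 ≤ a) :
    4 * (R / 2 ^ a) ≤ R := by
  rw [mul_div_assoc', div_le_iff₀ (by positivity)]
  nlinarith [pow_le_pow_right₀ (one_le_two : (1 : ℝ) ≤ 2) ha]

theorem pow_mul_ofReal_rpow_le {K : ℝ≥0∞} {c₀ s q R : ℝ} {a k : ℕ}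
    (hnum : K ^ k ≤ ENNReal.ofReal (c₀ * 2 ^ s * (2 ^ (q - s)) ^ a)) (hR : 0 < R) :
    K ^ k * ENNReal.ofReal (R ^ (-q)) ≤
      ENNReal.ofReal (c₀ * (R / 2 ^ a / (R / 2)) ^ s) * ENNReal.ofReal ((R / 2 ^ a) ^ (-q)) := by
  have ht : (0 : ℝ) < 2 ^ a := by positivity
  have hid : c₀ * 2 ^ s * ((2 : ℝ) ^ (q - s)) ^ a * R ^ (-q) =
      c₀ * (R / 2 ^ a / (R / 2)) ^ s * (R / 2 ^ a) ^ (-q) := by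
    have h1 : R / 2 ^ a / (R / 2) = 2 / 2 ^ a := by field_simp
    rw [h1, Real.rpow_pow_comm zero_le_two, Real.div_rpow zero_le_two ht.le,
      Real.div_rpow hR.le ht.le, Real.rpow_sub ht, Real.rpow_neg ht.le]
    have : (0 : ℝ) < ((2 : ℝ) ^ a) ^ s := Real.rpow_pos_of_pos ht s
    have : (0 : ℝ) < ((2 : ℝ) ^ a) ^ q := Real.rpow_pos_of_pos ht q
    field_simp
  calc K ^ k * ENNReal.ofReal (R ^ (-q))
      ≤ ENNReal.ofReal (c₀ * 2 ^ s * (2 ^ (q - s)) ^ a) * ENNReal.ofReal (R ^ (-q)) := by gcongr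
    _ = _ := by
        rw [← ENNReal.ofReal_mul' (by positivity), hid, ENNReal.ofReal_mul' (by positivity)]

theorem exists_pow_le_ofReal_mul_pow {K : ℝ≥0∞} (hK : K ≠ ⊤) {c₀ s q : ℝ} (hc₀ : 0 < c₀)
    (hs : s < q) (k b : ℕ) :
    ∃ a : ℕ, b ≤ a ∧ K ^ k ≤ ENNReal.ofReal (c₀ * 2 ^ s * (2 ^ (q - s)) ^ a) := by
  have h1 : (1 : ℝ) < 2 ^ (q - s) := Real.one_lt_rpow one_lt_two (sub_pos.2 hs)
  obtain ⟨a, ha⟩ := pow_unbounded_of_one_lt ((K ^ k).toReal / (c₀ * 2 ^ s)) h1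
  rw [div_lt_iff₀ (by positivity)] at ha
  refine ⟨max a b, le_max_right _ _, ?_⟩
  rw [← ENNReal.ofReal_toReal (pow_ne_top hK)]
  refine ENNReal.ofReal_le_ofReal (ha.le.trans ?_)
  rw [mul_comm]
  gcongr
  exacts [h1.le, le_max_left _ _]

variable [MeasurableSpace X] {μ : Measure X} {K : ℝ≥0∞}

def IsDoubling (μ : Measure X) (K : ℝ≥0∞) : Prop :=
  ∀ (x : X) (r : ℝ), 0 < r → μ (closedBall x (2 * r)) ≤ K * μ (closedBall x r)

noncomputable def ballContent (μ : Measure X) (q : ℝ) (x : X) (r : ℝ) : ℝ≥0∞ :=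
  ENNReal.ofReal (r ^ (-q)) * μ (closedBall x r)

/-- The defining inequality of "upper Assouad codimension `≤ s`", with constant `c₀`. -/
def AssouadCodimBound (μ : Measure X) (E : Set X) (s c₀ : ℝ) : Prop :=
  ∀ x ∈ E, ∀ r R : ℝ, 0 < r → r < R → ENNReal.ofReal R < ediam E →
    ENNReal.ofReal (c₀ * (r / R) ^ s) * μ (closedBall x R) ≤ μ (thickening r E ∩ closedBall x R)

namespace IsDoubling

theorem measure_closedBall_two_pow_mul_le (hd : IsDoubling μ K) (x : X) {r : ℝ} (hr : 0 < r)
    (k : ℕ) : μ (closedBall x (2 ^ k * r)) ≤ K ^ k * μ (closedBall x r) := by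
  induction k with
  | zero => simp
  | succ k ih =>
    calc μ (closedBall x (2 ^ (k + 1) * r)) = μ (closedBall x (2 * (2 ^ k * r))) := by ring_nf
      _ ≤ K * μ (closedBall x (2 ^ k * r)) := hd x _ (by positivity)
      _ ≤ K * (K ^ k * μ (closedBall x r)) := by gcongr
      _ = K ^ (k + 1) * μ (closedBall x r) := by ring

theorem measure_le_of_subset_closedBall (hd : IsDoubling μ K) {s : Set X} {x : X} {r : ℝ}
    {k : ℕ} (hr : 0 < r) (hs : s ⊆ closedBall x (2 ^ k * r)) :
    μ s ≤ K ^ k * μ (closedBall x r) :=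
  (measure_mono hs).trans (hd.measure_closedBall_two_pow_mul_le x hr k)

/-- The disjoint balls `B(y, ε / 2)`, `y ∈ t`, lie in `B(x, R + ε)`, and by doubling each of them
has at least a `K ^ (-k)` fraction of its measure. -/
theorem card_le_of_isSeparated [OpensMeasurableSpace X] (hd : IsDoubling μ K) {x : X}
    {R : ℝ} {ε : ℝ≥0} {k : ℕ} (hε : 0 < ε) (hk : 2 * R + ε ≤ 2 ^ k * (ε / 2))
    (h0 : μ (closedBall x (R + ε)) ≠ 0) (htop : μ (closedBall x (R + ε)) ≠ ⊤)
    (t : Finset X) (ht : ↑t ⊆ closedBall x R)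
    (hsep : (t : Set X).Pairwise fun y y' => (ε : ℝ) < dist y y') :
    (t.card : ℝ≥0∞) ≤ K ^ k := by
  have hε' : (0 : ℝ) < ε := hε
  have hdisj : (t : Set X).PairwiseDisjoint fun y => closedBall y (ε / 2) := by
    intro y hy y' hy' hne
    refine Set.disjoint_left.2 fun p hp hp' => ?_
    linarith [hsep hy hy' hne, dist_triangle_left y y' p, mem_closedBall.1 hp, mem_closedBall.1 hp']
  have hunion : ⋃ y ∈ t, closedBall y (ε / 2) ⊆ closedBall x (R + ε) :=
    Set.iUnion₂_subset fun y hy =>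
      closedBall_subset_closedBall' (by linarith [mem_closedBall.1 (ht hy)])
  have hball : ∀ y ∈ t, μ (closedBall x (R + ε)) ≤ K ^ k * μ (closedBall y (ε / 2)) :=
    fun y hy => hd.measure_le_of_subset_closedBall (by positivity)
      (closedBall_subset_closedBall' (by rw [dist_comm]; linarith [mem_closedBall.1 (ht hy)]))
  refine (ENNReal.mul_le_mul_iff_left h0 htop).1 ?_
  calc (t.card : ℝ≥0∞) * μ (closedBall x (R + ε)) = ∑ _y ∈ t, μ (closedBall x (R + ε)) := by
        rw [Finset.sum_const, nsmul_eq_mul]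
    _ ≤ ∑ y ∈ t, K ^ k * μ (closedBall y (ε / 2)) := Finset.sum_le_sum hball
    _ = K ^ k * μ (⋃ y ∈ t, closedBall y (ε / 2)) := by
        rw [measure_biUnion_finset hdisj fun y _ => measurableSet_closedBall, Finset.mul_sum]
    _ ≤ K ^ k * μ (closedBall x (R + ε)) := by grw [hunion]

theorem packingNumber_ne_top [OpensMeasurableSpace X] (hd : IsDoubling μ K) (hK : K ≠ ⊤)
    {x : X} (hvol : ∀ r : ℝ, 0 < r → 0 < μ (closedBall x r) ∧ μ (closedBall x r) < ⊤)
    {R : ℝ} (hR : 0 ≤ R) {A : Set X} (hA : A ⊆ closedBall x R) {ε : ℝ≥0} (hε : 0 < ε) :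
    packingNumber ε A ≠ ⊤ := by
  have hε' : (0 : ℝ) < ε := hε
  obtain ⟨k, hk⟩ := pow_unbounded_of_one_lt ((2 * R + ε) / (ε / 2)) one_lt_two
  rw [div_lt_iff₀ (by positivity)] at hk
  obtain ⟨N, hN⟩ := ENNReal.exists_nat_gt (pow_ne_top hK : K ^ k ≠ ⊤)
  have hball := hvol (R + ε) (by positivity)
  refine ne_top_of_le_ne_top (ENat.natCast_ne_top N)
    (iSup_le fun C => iSup_le fun hCA => iSup_le fun hsep => ?_)
  have hcard : ∀ t : Finset X, ↑t ⊆ C → t.card < N := fun t ht => by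
    exact_mod_cast (hd.card_le_of_isSeparated hε hk.le hball.1.ne' hball.2.ne t
      (ht.trans (hCA.trans hA)) ((isSeparated_coe_iff.1 hsep).mono ht)).trans_lt hN
  rcases C.finite_or_infinite with hC | hC
  · rw [hC.encard_eq_coe_toFinset_card]
    exact_mod_cast (hcard _ (by simp)).le
  · obtain ⟨t, htC, htcard⟩ := hC.exists_subset_card_eq N
    exact absurd htcard (hcard t htC).ne

theorem exists_finset_separated_cover [OpensMeasurableSpace X] (hd : IsDoubling μ K)
    (hK : K ≠ ⊤) {x : X}
    (hvol : ∀ r : ℝ, 0 < r → 0 < μ (closedBall x r) ∧ μ (closedBall x r) < ⊤)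
    {R : ℝ} (hR : 0 ≤ R) {A : Set X} (hA : A ⊆ closedBall x R) {ε : ℝ} (hε : 0 < ε) :
    ∃ M : Finset X, ↑M ⊆ A ∧ (M : Set X).Pairwise (fun y y' => ε < dist y y') ∧
      A ⊆ ⋃ y ∈ M, closedBall y ε := by
  lift ε to ℝ≥0 using hε.le
  have h := hd.packingNumber_ne_top hK hvol hR hA (by exact_mod_cast hε)
  have hfin : (maximalSeparatedSet ε A).Finite := by
    rw [← Set.encard_ne_top_iff, encard_maximalSeparatedSet h]
    exact h
  refine ⟨hfin.toFinset, by simpa using maximalSeparatedSet_subset, ?_, ?_⟩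
  · simpa using isSeparated_coe_iff.1 isSeparated_maximalSeparatedSet
  · simpa using (isCover_maximalSeparatedSet h).subset_iUnion_closedBall

theorem totallyBounded_closedBall [OpensMeasurableSpace X] (hd : IsDoubling μ K) (hK : K ≠ ⊤)
    {x : X} (hvol : ∀ r : ℝ, 0 < r → 0 < μ (closedBall x r) ∧ μ (closedBall x r) < ⊤)
    (R : ℝ) : TotallyBounded (closedBall x R) := by
  refine Metric.totallyBounded_iff.2 fun ε hε => ?_
  obtain ⟨M, -, -, hM⟩ := hd.exists_finset_separated_cover hK hvol (abs_nonneg R)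
    (closedBall_subset_closedBall (le_abs_self R)) (half_pos hε)
  exact ⟨M, M.finite_toSet,
    hM.trans (Set.iUnion₂_mono fun y _ => closedBall_subset_ball (half_lt_self hε))⟩

theorem ballContent_two_mul_le (hd : IsDoubling μ K) {q : ℝ} (hq : 0 ≤ q) (x : X) {ρ : ℝ}
    (hρ : 0 < ρ) : ballContent μ q x (2 * ρ) ≤ K * ballContent μ q x ρ := by
  calc ENNReal.ofReal ((2 * ρ) ^ (-q)) * μ (closedBall x (2 * ρ))
      ≤ ENNReal.ofReal (ρ ^ (-q)) * (K * μ (closedBall x ρ)) := by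
        gcongr ENNReal.ofReal ?_ * ?_
        · exact Real.rpow_le_rpow_of_nonpos hρ (by linarith) (by linarith)
        · exact hd x ρ hρ
    _ = K * ballContent μ q x ρ := by rw [ballContent]; ring

theorem ballContent_le_of_inter_nonempty (hd : IsDoubling μ K) {q : ℝ} (hq : 0 ≤ q)
    {w z : X} {R ρ : ℝ} {k : ℕ} (hρ : 0 < ρ) (hρR : ρ ≤ 2 * R) (hk : 2 * R + ρ ≤ 2 ^ k * ρ)
    (hmeet : (closedBall z ρ ∩ closedBall w R).Nonempty) :
    ENNReal.ofReal (2 ^ (-q)) * ballContent μ q w R ≤ K ^ k * ballContent μ q z ρ := by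
  obtain ⟨y, hyz, hyw⟩ := hmeet
  have hR : 0 < R := by linarith
  have hsub : closedBall w R ⊆ closedBall z (2 ^ k * ρ) := closedBall_subset_closedBall' <| by
    linarith [dist_triangle w y z, dist_comm w y, mem_closedBall.1 hyz, mem_closedBall.1 hyw]
  calc ENNReal.ofReal (2 ^ (-q)) * ballContent μ q w R
      = ENNReal.ofReal ((2 * R) ^ (-q)) * μ (closedBall w R) := by
        rw [ballContent, ← mul_assoc, ← ENNReal.ofReal_mul (by positivity),
          Real.mul_rpow zero_le_two hR.le]
    _ ≤ ENNReal.ofReal (ρ ^ (-q)) * (K ^ k * μ (closedBall z ρ)) := by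
        gcongr ENNReal.ofReal ?_ * ?_
        · exact Real.rpow_le_rpow_of_nonpos hρ hρR (by linarith)
        · exact hd.measure_le_of_subset_closedBall hρ hsub
    _ = K ^ k * ballContent μ q z ρ := by rw [ballContent]; ring

theorem measure_thickening_inter_closedBall_le (hd : IsDoubling μ K) {E : Set X} {w : X}
    {ρ r : ℝ} (hr : 0 < r) {M : Finset X}
    (hM : E ∩ closedBall w (ρ + r) ⊆ ⋃ e ∈ M, closedBall e (4 * r)) :
    μ (thickening r E ∩ closedBall w ρ) ≤ K ^ 3 * ∑ e ∈ M, μ (closedBall e r) := by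
  have hsub : thickening r E ∩ closedBall w ρ ⊆ ⋃ e ∈ M, closedBall e (2 ^ 3 * r) := by
    rintro y ⟨hyE, hyw⟩
    obtain ⟨p, hpE, hyp⟩ := mem_thickening_iff.1 hyE
    have hpw : p ∈ closedBall w (ρ + r) := mem_closedBall.2 <| by
      linarith [dist_triangle p y w, dist_comm p y, mem_closedBall.1 hyw]
    obtain ⟨e, he, hpe⟩ := Set.mem_iUnion₂.1 (hM ⟨hpE, hpw⟩)
    exact Set.mem_iUnion₂.2 ⟨e, he, mem_closedBall.2 <| by
      linarith [dist_triangle y p e, mem_closedBall.1 hpe]⟩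
  calc μ (thickening r E ∩ closedBall w ρ) ≤ ∑ e ∈ M, μ (closedBall e (2 ^ 3 * r)) :=
        (measure_mono hsub).trans (measure_biUnion_finset_le M _)
    _ ≤ ∑ e ∈ M, K ^ 3 * μ (closedBall e r) :=
        Finset.sum_le_sum fun e _ => hd.measure_closedBall_two_pow_mul_le e hr 3
    _ = K ^ 3 * ∑ e ∈ M, μ (closedBall e r) := (Finset.mul_sum ..).symm

end IsDoubling

section Content

variable [OpensMeasurableSpace X] {E : Set X} {q s c₀ : ℝ} {a : ℕ}

theorem IsDoubling.exists_separated_finset_measure_closedBall_le (hd : IsDoubling μ K) (hK : K ≠ ⊤)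
    (hE : AssouadCodimBound μ E s c₀) {w : X} (hw : w ∈ E)
    (hvol : ∀ r : ℝ, 0 < r → 0 < μ (closedBall w r) ∧ μ (closedBall w r) < ⊤)
    {ρ r : ℝ} (hr : 0 < r) (hrρ : r < ρ) (hdiam : ENNReal.ofReal ρ < ediam E) :
    ∃ M : Finset X, ↑M ⊆ E ∩ closedBall w (ρ + r) ∧
      (M : Set X).Pairwise (fun e e' => 4 * r < dist e e') ∧
      ENNReal.ofReal (c₀ * (r / ρ) ^ s) * μ (closedBall w ρ) ≤
        K ^ 3 * ∑ e ∈ M, μ (closedBall e r) := by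
  obtain ⟨M, hME, hMsep, hMcov⟩ := hd.exists_finset_separated_cover hK hvol
    (A := E ∩ closedBall w (ρ + r)) (by linarith) Set.inter_subset_right (by positivity : 0 < 4 * r)
  exact ⟨M, hME, hMsep, (hE w hw r ρ hr hrρ hdiam).trans
    (hd.measure_thickening_inter_closedBall_le hr hMcov)⟩

theorem ballContent_le_sum_of_small_radii {ι : Type*} (hd : IsDoubling μ K) (hK : K ≠ ⊤)
    (hE : AssouadCodimBound μ E s c₀) (hc₀ : 0 < c₀) (ha : 2 ≤ a)
    (hnum : K ^ 4 ≤ ENNReal.ofReal (c₀ * 2 ^ s * (2 ^ (q - s)) ^ a)) {w : X} (hw : w ∈ E)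
    (hvol : ∀ r : ℝ, 0 < r → 0 < μ (closedBall w r) ∧ μ (closedBall w r) < ⊤)
    {R : ℝ} (hR : 0 < R) (hdiam : ENNReal.ofReal R < ediam E)
    {G : Finset ι} {z : ι → X} {ρ : ι → ℝ} {L : ℝ≥0∞}
    (hsmall : ∀ i ∈ G, (closedBall (z i) (ρ i) ∩ closedBall w R).Nonempty → ρ i < R / 2 ^ a)
    (hlocal : ∀ e ∈ E ∩ closedBall w (R / 2 + R / 2 ^ a),
      ENNReal.ofReal (2 ^ (-q)) * ballContent μ q e (R / 2 ^ a) ≤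
        L * ∑ i ∈ ballsMeeting G z ρ e (R / 2 ^ a), ballContent μ q (z i) (ρ i)) :
    ENNReal.ofReal (2 ^ (-q)) * ballContent μ q w R ≤
      L * ∑ i ∈ G, ballContent μ q (z i) (ρ i) := by
  set r := R / 2 ^ a
  have hr : 0 < r := by positivity
  have hrR : 4 * r ≤ R := four_mul_div_two_pow_le hR.le ha
  obtain ⟨M, hME, hMsep, hthick⟩ := hd.exists_separated_finset_measure_closedBall_le hK hE hw
    hvol (ρ := R / 2) hr (by linarith) ((ENNReal.ofReal_le_ofReal (by linarith)).trans_lt hdiam)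
  have hsub : ∀ e ∈ M, closedBall e r ⊆ closedBall w R := fun e he =>
    closedBall_subset_closedBall' (by linarith [mem_closedBall.1 (hME (Finset.mem_coe.2 he)).2])
  set c := ENNReal.ofReal (c₀ * (r / (R / 2)) ^ s)
  have hc : c ≠ 0 := by positivity
  refine (ENNReal.mul_le_mul_iff_right hc ENNReal.ofReal_ne_top).1 ?_
  calc c * (ENNReal.ofReal (2 ^ (-q)) * ballContent μ q w R)
      ≤ c * (ENNReal.ofReal (2 ^ (-q)) * (ENNReal.ofReal (R ^ (-q)) *
          (K * μ (closedBall w (R / 2))))) := by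
        rw [ballContent]
        gcongr
        simpa [mul_div_cancel₀] using hd w (R / 2) (by positivity)
    _ = ENNReal.ofReal (2 ^ (-q)) * ENNReal.ofReal (R ^ (-q)) * K *
          (c * μ (closedBall w (R / 2))) := by ring
    _ ≤ ENNReal.ofReal (2 ^ (-q)) * ENNReal.ofReal (R ^ (-q)) * K *
          (K ^ 3 * ∑ e ∈ M, μ (closedBall e r)) := by gcongr
    _ = ENNReal.ofReal (2 ^ (-q)) * (K ^ 4 * ENNReal.ofReal (R ^ (-q))) *
          ∑ e ∈ M, μ (closedBall e r) := by ring
    _ ≤ ENNReal.ofReal (2 ^ (-q)) * (c * ENNReal.ofReal (r ^ (-q))) *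
          ∑ e ∈ M, μ (closedBall e r) := by grw [pow_mul_ofReal_rpow_le hnum hR]
    _ = c * ∑ e ∈ M, ENNReal.ofReal (2 ^ (-q)) * ballContent μ q e r := by
        simp only [ballContent, Finset.mul_sum]
        refine Finset.sum_congr rfl fun e _ => by ring
    _ ≤ c * ∑ e ∈ M, L * ∑ i ∈ ballsMeeting G z ρ e r, ballContent μ q (z i) (ρ i) := by
        gcongr c * ?_
        exact Finset.sum_le_sum fun e he => hlocal e (hME he)
    _ ≤ c * (L * ∑ i ∈ G, ballContent μ q (z i) (ρ i)) := by
        rw [← Finset.mul_sum]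
        gcongr
        refine sum_sum_ballsMeeting_le hMsep (fun i hi e he hmeet => hsmall i hi ?_) _
        obtain ⟨p, hpi, hpe⟩ := hmeet
        exact ⟨p, hpi, hsub e he hpe⟩

theorem ballContent_le_sum_of_le_two_pow_mul {ι : Type*} (hd : IsDoubling μ K) (hK : K ≠ ⊤)
    (hvol : ∀ (x : X) (r : ℝ), 0 < r → 0 < μ (closedBall x r) ∧ μ (closedBall x r) < ⊤)
    (hE : AssouadCodimBound μ E s c₀) (hq : 0 ≤ q) (hc₀ : 0 < c₀) (ha : 2 ≤ a)
    (hnum : K ^ 4 ≤ ENNReal.ofReal (c₀ * 2 ^ s * (2 ^ (q - s)) ^ a)) (n : ℕ) :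
    ∀ w ∈ E, ∀ R : ℝ, 0 < R → ENNReal.ofReal R < ediam E →
      ∀ (G : Finset ι) (z : ι → X) (ρ : ι → ℝ), (∀ i ∈ G, 0 < ρ i) → (∀ i ∈ G, ρ i ≤ 2 * R) →
        (∀ i ∈ G, R ≤ 2 ^ n * ρ i) → E ∩ closedBall w R ⊆ ⋃ i ∈ G, closedBall (z i) (ρ i) →
        ENNReal.ofReal (2 ^ (-q)) * ballContent μ q w R ≤
          K ^ (a + 2) * ∑ i ∈ G, ballContent μ q (z i) (ρ i) := by
  induction n using Nat.strong_induction_on with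
  | _ n ih =>
  intro w hw R hR hdiam G z ρ hpos hle hscale hcover
  have h2a : (1 : ℝ) ≤ 2 ^ a := one_le_pow₀ one_le_two
  by_cases hbig : ∃ i ∈ G, R / 2 ^ a ≤ ρ i ∧ (closedBall (z i) (ρ i) ∩ closedBall w R).Nonempty
  · obtain ⟨i, hi, hρi, hmeet⟩ := hbig
    have hk : 2 * R + ρ i ≤ 2 ^ (a + 2) * ρ i := by
      rw [div_le_iff₀ (by positivity)] at hρi
      rw [pow_add]
      nlinarith [hpos i hi]
    refine (hd.ballContent_le_of_inter_nonempty hq (hpos i hi) (hle i hi) hk hmeet).trans ?_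
    gcongr
    exact Finset.single_le_sum (f := fun j => ballContent μ q (z j) (ρ j)) (fun j _ => zero_le) hi
  have hsmall : ∀ i ∈ G, (closedBall (z i) (ρ i) ∩ closedBall w R).Nonempty →
      ρ i < R / 2 ^ a := fun i hi hmeet => lt_of_not_ge fun h => hbig ⟨i, hi, h, hmeet⟩
  obtain ⟨i₀, hi₀, hwi₀⟩ := Set.mem_iUnion₂.1 (hcover ⟨hw, mem_closedBall_self hR.le⟩)
  have han : a < n := by
    have h1 := hsmall i₀ hi₀ ⟨w, hwi₀, mem_closedBall_self hR.le⟩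
    rw [lt_div_iff₀ (by positivity)] at h1
    by_contra! hna
    nlinarith [hscale i₀ hi₀, hpos i₀ hi₀, pow_le_pow_right₀ (one_le_two : (1 : ℝ) ≤ 2) hna]
  refine ballContent_le_sum_of_small_radii hd hK hE hc₀ ha hnum hw (hvol w) hR hdiam hsmall
    fun e he => ?_
  have hsub : closedBall e (R / 2 ^ a) ⊆ closedBall w R := closedBall_subset_closedBall' <| by
    linarith [mem_closedBall.1 he.2, four_mul_div_two_pow_le hR.le ha]
  have hmem : ∀ i ∈ ballsMeeting G z ρ e (R / 2 ^ a), i ∈ G ∧ ρ i < R / 2 ^ a := by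
    intro i hi
    obtain ⟨hiG, p, hpi, hpe⟩ := mem_ballsMeeting.1 hi
    exact ⟨hiG, hsmall i hiG ⟨p, hpi, hsub hpe⟩⟩
  refine ih (n - a) (by omega) e he.1 (R / 2 ^ a) (by positivity)
    ((ENNReal.ofReal_le_ofReal (div_le_self hR.le h2a)).trans_lt hdiam) _ z ρ
    (fun i hi => hpos i (hmem i hi).1)
    (fun i hi => by linarith [(hmem i hi).2, hpos i (hmem i hi).1]) (fun i hi => ?_)
    (inter_closedBall_subset_biUnion_ballsMeeting
      ((Set.inter_subset_inter_right E hsub).trans hcover))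
  rw [div_le_iff₀ (by positivity), mul_right_comm, ← pow_add, Nat.sub_add_cancel han.le]
  exact hscale i (hmem i hi).1

theorem ballContent_le_sum_of_finset_cover {ι : Type*} (hd : IsDoubling μ K) (hK : K ≠ ⊤)
    (hvol : ∀ (x : X) (r : ℝ), 0 < r → 0 < μ (closedBall x r) ∧ μ (closedBall x r) < ⊤)
    (hE : AssouadCodimBound μ E s c₀) (hq : 0 ≤ q) (hc₀ : 0 < c₀) (ha : 2 ≤ a)
    (hnum : K ^ 4 ≤ ENNReal.ofReal (c₀ * 2 ^ s * (2 ^ (q - s)) ^ a))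
    {w : X} (hw : w ∈ E) {R : ℝ} (hR : 0 < R) (hdiam : ENNReal.ofReal R < ediam E)
    {G : Finset ι} {z : ι → X} {ρ : ι → ℝ} (hpos : ∀ i ∈ G, 0 < ρ i) (hle : ∀ i ∈ G, ρ i ≤ 2 * R)
    (hcover : E ∩ closedBall w R ⊆ ⋃ i ∈ G, closedBall (z i) (ρ i)) :
    ENNReal.ofReal (2 ^ (-q)) * ballContent μ q w R ≤
      K ^ (a + 2) * ∑ i ∈ G, ballContent μ q (z i) (ρ i) := by
  obtain ⟨n, hn⟩ := ((Filter.eventually_all_finset G).2 fun i _ =>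
    (tendsto_pow_atTop_atTop_of_one_lt (one_lt_two : (1 : ℝ) < 2)).eventually_ge_atTop
      (R / ρ i)).exists
  exact ballContent_le_sum_of_le_two_pow_mul hd hK hvol hE hq hc₀ ha hnum n w hw R hR hdiam G z ρ
    hpos hle (fun i hi => (div_le_iff₀ (hpos i hi)).1 (hn i hi)) hcover

end Content

end

theorem hausdorff_content_density_of_upper_assouad_codim_lt_general
    {X : Type*} [MetricSpace X] [CompleteSpace X] [MeasurableSpace X] [BorelSpace X]
    (μ : Measure X)
    (hvol : ∀ (x : X) (r : ℝ), 0 < r →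
      0 < μ (Metric.closedBall x r) ∧ μ (Metric.closedBall x r) < ⊤)
    (C_D : ℝ) (hCD : 1 ≤ C_D)
    (hdbl : ∀ (x : X) (r : ℝ), 0 < r →
      μ (Metric.closedBall x (2 * r)) ≤ ENNReal.ofReal C_D * μ (Metric.closedBall x r))
    (E : Set X) (hE : IsClosed E) (q : ℝ) (hq : 0 < q)
    (s c₀ : ℝ) (hs : s < q) (hc₀ : 0 < c₀)
    (hthick : ∀ x ∈ E, ∀ r R : ℝ, 0 < r → r < R → ENNReal.ofReal R < EMetric.diam E →
      ENNReal.ofReal (c₀ * (r / R) ^ s) * μ (Metric.closedBall x R) ≤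
        μ (Metric.thickening r E ∩ Metric.closedBall x R)) :
    ∃ C : ℝ, 0 < C ∧
      ∀ w ∈ E, ∀ R : ℝ, 0 < R → ENNReal.ofReal R < EMetric.diam E →
        ∀ (z : ℕ → X) (ρ : ℕ → ℝ), (∀ i, 0 < ρ i) → (∀ i, ρ i ≤ R) →
          E ∩ Metric.closedBall w R ⊆ ⋃ i, Metric.closedBall (z i) (ρ i) →
          ENNReal.ofReal (C * R ^ (-q)) * μ (Metric.closedBall w R) ≤
            ∑' i, ENNReal.ofReal ((ρ i) ^ (-q)) * μ (Metric.closedBall (z i) (ρ i)) := by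
  set K := ENNReal.ofReal C_D
  have hK : K ≠ ⊤ := ENNReal.ofReal_ne_top
  have hK0 : K ≠ 0 := (ENNReal.ofReal_pos.2 (by linarith)).ne'
  obtain ⟨a, ha, hnum⟩ := exists_pow_le_ofReal_mul_pow hK hc₀ hs 4 2
  refine ⟨2 ^ (-q) / C_D ^ (a + 3), by positivity, fun w hw R hR hdiam z ρ hpos hle hcover => ?_⟩
  have hcpt : IsCompact (E ∩ closedBall w R) :=
    ((IsDoubling.totallyBounded_closedBall hdbl hK (hvol w) R).subset
      Set.inter_subset_right).isCompact_of_isClosed (hE.inter isClosed_closedBall)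
  obtain ⟨G, hG⟩ := hcpt.exists_finset_subset_biUnion_closedBall_two_mul hpos hcover
  refine (ENNReal.mul_le_mul_iff_right (pow_ne_zero (a + 3) hK0) (pow_ne_top hK)).1 ?_
  calc K ^ (a + 3) * (ENNReal.ofReal (2 ^ (-q) / C_D ^ (a + 3) * R ^ (-q)) * μ (closedBall w R))
      = ENNReal.ofReal (2 ^ (-q)) * ballContent μ q w R := by
        rw [ballContent, ← mul_assoc, ← mul_assoc, ← ENNReal.ofReal_pow (by linarith),
          ← ENNReal.ofReal_mul (by positivity), ← ENNReal.ofReal_mul (by positivity)]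
        congr 2
        field_simp
    _ ≤ K ^ (a + 2) * ∑ i ∈ G, ballContent μ q (z i) (2 * ρ i) :=
        ballContent_le_sum_of_finset_cover hdbl hK hvol hthick hq.le hc₀ ha hnum hw hR hdiam
          (fun i _ => by linarith [hpos i]) (fun i _ => by linarith [hle i]) hG
    _ ≤ K ^ (a + 2) * ∑ i ∈ G, K * ballContent μ q (z i) (ρ i) := by
        gcongr with i
        exact IsDoubling.ballContent_two_mul_le hdbl hq.le _ (hpos i)
    _ ≤ K ^ (a + 3) * ∑' i, ballContent μ q (z i) (ρ i) := by
        rw [← Finset.mul_sum, ← mul_assoc, ← pow_succ]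
        gcongr
        exact ENNReal.sum_le_tsum G

/-- (Lemma 5.1 of the paper.) If the upper Assouad codimension of a
closed set `E` is less than `q`, then `E` satisfies a Hausdorff content density
condition of codimension `q`: every countable cover of `E ∩ B(w,R)` by closed balls of
radii at most `R` has codimension-`q` content at least `C R^{-q} μ(B(w,R))`. -/
theorem hausdorff_content_density_of_upper_assouad_codim_lt
    {X : Type*} [MetricSpace X] [CompleteSpace X] [MeasurableSpace X] [BorelSpace X]
    (μ : Measure X)
    (hvol : ∀ (x : X) (r : ℝ), 0 < r →
      0 < μ (Metric.closedBall x r) ∧ μ (Metric.closedBall x r) < ⊤)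
    (C_D : ℝ) (hCD : 1 ≤ C_D)
    (hdbl : ∀ (x : X) (r : ℝ), 0 < r →
      μ (Metric.closedBall x (2 * r)) ≤ ENNReal.ofReal C_D * μ (Metric.closedBall x r))
    (E : Set X) (hE : IsClosed E) (q : ℝ) (hq : 0 < q)
    (s c₀ : ℝ) (hs0 : 0 ≤ s) (hs : s < q) (hc₀ : 0 < c₀)
    (hthick : ∀ x ∈ E, ∀ r R : ℝ, 0 < r → r < R → ENNReal.ofReal R < EMetric.diam E →
      ENNReal.ofReal (c₀ * (r / R) ^ s) * μ (Metric.closedBall x R) ≤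
        μ (Metric.thickening r E ∩ Metric.closedBall x R)) :
    ∃ C : ℝ, 0 < C ∧
      ∀ w ∈ E, ∀ R : ℝ, 0 < R → ENNReal.ofReal R < EMetric.diam E →
        ∀ (z : ℕ → X) (ρ : ℕ → ℝ), (∀ i, 0 < ρ i) → (∀ i, ρ i ≤ R) →
          E ∩ Metric.closedBall w R ⊆ ⋃ i, Metric.closedBall (z i) (ρ i) →
          ENNReal.ofReal (C * R ^ (-q)) * μ (Metric.closedBall w R) ≤
            ∑' i, ENNReal.ofReal ((ρ i) ^ (-q)) * μ (Metric.closedBall (z i) (ρ i)) :=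
  hausdorff_content_density_of_upper_assouad_codim_lt_general μ hvol C_D hCD hdbl E hE q hq s c₀ hs
    hc₀ hthick
end

section
/- Let n ≥ 1, 1 ≤ p < ∞ and β ∈ ℝ, and let Ω ⊆ ℝⁿ be an open set with nonempty complement that admits a (p,β)-Hardy inequality with constant C₀, i.e. ∫_Ω |u(x)|^p d_Ω(x)^{β−p} dx ≤ C₀ ∫_Ω ‖∇u(x)‖^p d_Ω(x)^β dx for every Lipschitz u : ℝⁿ → ℝ with compact support contained in Ω. Then there exist ε > 0 and C > 0, depending only on n, p, β and C₀, such that for every β' ∈ ℝ with β − ε ≤ β' ≤ β + ε, Ω admits the (p,β')-Hardy inequality with the same constant C: ∫_Ω |u(x)|^p d_Ω(x)^{β'−p} dx ≤ C ∫_Ω ‖∇u(x)‖^p d_Ω(x)^{β'} dx for every Lipschitz u : ℝⁿ → ℝ with compact support contained in Ω. -/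
/-!
Given a test function `u` and `β'` close to `β`, apply the `(p, β)`-inequality to
`w = u d_Ω ^ s` with `s = (β' - β) / p`, a Lipschitz function because `d_Ω` is bounded away from
`0` and `∞` on the support of `u`. Its left-hand side is the `(p, β')` left-hand side of `u`,
while `‖∇w‖ ≤ d_Ω ^ s ‖∇u‖ + |s| d_Ω ^ (s - 1) |u|` because `d_Ω` is 1-Lipschitz, so its right-hand
side is at most `2 ^ (p - 1) C₀` times `∫ ‖∇u‖ ^ p d_Ω ^ β' + |s| ^ p ∫ |u| ^ p d_Ω ^ (β' - p)`.
For `|s|` small the last term is at most half of the left-hand side, which is finite, and is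
absorbed into it.
-/

open MeasureTheory Metric ENNReal Set

lemma Real.rpow_add_le_mul_rpow_add_rpow {a b p : ℝ} (ha : 0 ≤ a) (hb : 0 ≤ b) (hp : 1 ≤ p) :
    (a + b) ^ p ≤ 2 ^ (p - 1) * (a ^ p + b ^ p) := by
  lift a to NNReal using ha
  lift b to NNReal using hb
  exact_mod_cast NNReal.rpow_add_le_mul_rpow_add_rpow a b hp

lemma mul_rpow_rpow_mul_rpow {a r s p γ : ℝ} (ha : 0 ≤ a) (hr : 0 < r) :
    (a * r ^ s) ^ p * r ^ γ = a ^ p * r ^ (s * p + γ) := by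
  rw [Real.mul_rpow ha (Real.rpow_nonneg hr.le _), ← Real.rpow_mul hr.le,
    Real.rpow_add hr, mul_assoc]

lemma rpow_add_mul_rpow_le {r G U s p β β' : ℝ} (hr : 0 < r) (hG : 0 ≤ G) (hU : 0 ≤ U)
    (hp : 1 ≤ p) (hs : s * p = β' - β) :
    (r ^ s * G + |s| * r ^ (s - 1) * U) ^ p * r ^ β ≤
      2 ^ (p - 1) * (G ^ p * r ^ β' + |s| ^ p * (U ^ p * r ^ (β' - p))) := by
  have h₁ : (G * r ^ s) ^ p * r ^ β = G ^ p * r ^ β' := by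
    rw [mul_rpow_rpow_mul_rpow hG hr, hs, sub_add_cancel]
  have h₂ : (|s| * U * r ^ (s - 1)) ^ p * r ^ β = |s| ^ p * (U ^ p * r ^ (β' - p)) := by
    rw [mul_rpow_rpow_mul_rpow (by positivity) hr, Real.mul_rpow (abs_nonneg s) hU,
      sub_mul, hs, one_mul, mul_assoc, show β' - β - p + β = β' - p by ring]
  calc (r ^ s * G + |s| * r ^ (s - 1) * U) ^ p * r ^ β
      = (G * r ^ s + |s| * U * r ^ (s - 1)) ^ p * r ^ β := by ac_rfl
    _ ≤ 2 ^ (p - 1) * ((G * r ^ s) ^ p + (|s| * U * r ^ (s - 1)) ^ p) * r ^ β := by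
        gcongr
        exact Real.rpow_add_le_mul_rpow_add_rpow (by positivity) (by positivity) hp
    _ = _ := by rw [mul_assoc, add_mul, h₁, h₂]

lemma ENNReal.le_ofReal_two_mul_of_le_add {A B : ℝ≥0∞} {a c : ℝ} (hA : A ≠ ⊤) (hc : c ≤ 1 / 2)
    (h : A ≤ ENNReal.ofReal a * B + ENNReal.ofReal c * A) :
    A ≤ ENNReal.ofReal (2 * a) * B := by
  have hcA : ENNReal.ofReal c * A ≤ A / 2 := calc
    ENNReal.ofReal c * A ≤ ENNReal.ofReal (1 / 2) * A := by gcongr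
    _ = A / 2 := by simp [ENNReal.div_eq_inv_mul]
  have hhalf : A / 2 ≤ ENNReal.ofReal a * B := by
    rw [← ENNReal.add_le_add_iff_right (ENNReal.div_ne_top hA two_ne_zero), ENNReal.add_halves]
    exact h.trans (by gcongr)
  calc A = 2 * (A / 2) := (ENNReal.mul_div_cancel two_ne_zero ofNat_ne_top).symm
    _ ≤ 2 * (ENNReal.ofReal a * B) := by gcongr
    _ = ENNReal.ofReal (2 * a) * B := by
      rw [ENNReal.ofReal_mul zero_le_two, ENNReal.ofReal_ofNat, mul_assoc]

lemma LipschitzWith.mul_of_norm_le {α R : Type*} [PseudoMetricSpace α] [SeminormedRing R]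
    {f g : α → R} {Kf Kg A B : NNReal} (hf : LipschitzWith Kf f) (hg : LipschitzWith Kg g)
    (hfA : ∀ x, ‖f x‖ ≤ A) (hgB : ∀ x, ‖g x‖ ≤ B) :
    LipschitzWith (A * Kg + B * Kf) fun x => f x * g x := by
  refine LipschitzWith.of_dist_le_mul fun x y => ?_
  rw [dist_eq_norm]
  calc ‖f x * g x - f y * g y‖ = ‖f x * (g x - g y) + (f x - f y) * g y‖ := by
        rw [mul_sub, sub_mul, sub_add_sub_cancel]
    _ ≤ ‖f x‖ * ‖g x - g y‖ + ‖f x - f y‖ * ‖g y‖ :=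
        (norm_add_le _ _).trans (add_le_add (norm_mul_le _ _) (norm_mul_le _ _))
    _ ≤ A * (Kg * dist x y) + (Kf * dist x y) * B := by
        gcongr
        · exact hfA x
        · simpa [dist_eq_norm] using hg.dist_le_mul x y
        · simpa [dist_eq_norm] using hf.dist_le_mul x y
        · exact hgB y
    _ = (A * Kg + B * Kf : NNReal) * dist x y := by push_cast; ring

lemma ContDiffOn.exists_lipschitzWith_comp_projIcc {F : Type*} [NormedAddCommGroup F]
    [NormedSpace ℝ F] {φ : ℝ → F} {a b : ℝ} (hab : a ≤ b) (hφ : ContDiffOn ℝ 1 φ (Icc a b)) :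
    ∃ K, LipschitzWith K fun r => φ (projIcc a b hab r) := by
  obtain ⟨K, hK⟩ := hφ.exists_lipschitzOnWith one_ne_zero (convex_Icc a b) isCompact_Icc
  exact ⟨K * 1, hK.to_restrict.comp (LipschitzWith.projIcc hab)⟩

/-- On `tsupport u` the values of `f` lie in an interval `[δ, b]` with `δ > 0`, so `u * f ^ s`
equals `u` times the `s`-th power of `f` clamped to `[δ, b]`: a product of bounded Lipschitz
functions. -/
lemma LipschitzWith.exists_lipschitzWith_mul_rpow {α : Type*} [PseudoMetricSpace α]
    {u f : α → ℝ} {Ku Kf : NNReal} (hu : LipschitzWith Ku u) (hcs : HasCompactSupport u)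
    (hf : LipschitzWith Kf f) (hpos : ∀ x ∈ tsupport u, 0 < f x) (s : ℝ) :
    ∃ L, LipschitzWith L fun x => u x * f x ^ s := by
  obtain ⟨δ, hδ, hδf⟩ := hcs.exists_forall_le' hf.continuous.continuousOn hpos
  obtain ⟨D, hD⟩ := hcs.exists_bound_of_continuousOn hf.continuous.continuousOn
  have hδb : δ ≤ max δ D := le_max_left _ _
  have hrpow : ContinuousOn (fun r : ℝ => r ^ s) (Icc δ (max δ D)) := fun r hr =>
    (Real.continuousAt_rpow_const _ _ (Or.inl (hδ.trans_le hr.1).ne')).continuousWithinAt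
  obtain ⟨Kh, hKh⟩ : ∃ K, LipschitzWith K fun r => (projIcc δ (max δ D) hδb r : ℝ) ^ s :=
    ContDiffOn.exists_lipschitzWith_comp_projIcc hδb fun r hr =>
      (Real.contDiffAt_rpow_const_of_ne (hδ.trans_le hr.1).ne').contDiffWithinAt
  obtain ⟨B, hB⟩ := isCompact_Icc.exists_bound_of_continuousOn hrpow
  obtain ⟨A, hA⟩ := hcs.exists_bound_of_continuous hu.continuous
  have hclamp : (fun x => u x * f x ^ s) =
      fun x => u x * (projIcc δ (max δ D) hδb (f x) : ℝ) ^ s := by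
    funext x
    by_cases hx : x ∈ tsupport u
    · have hfx : f x ∈ Icc δ (max δ D) :=
        ⟨hδf x hx, (le_abs_self _).trans ((hD x hx).trans (le_max_right _ _))⟩
      rw [projIcc_of_mem hδb hfx]
    · simp [image_eq_zero_of_notMem_tsupport hx]
  rw [hclamp]
  exact ⟨_, hu.mul_of_norm_le (hKh.comp hf) (fun x => (hA x).trans (Real.le_coe_toNNReal A))
    (fun x => (hB _ (projIcc δ _ hδb (f x)).2).trans (Real.le_coe_toNNReal B))⟩

lemma norm_fderiv_mul_rpow_le {E : Type*} [NormedAddCommGroup E] [NormedSpace ℝ E]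
    {f g : E → ℝ} {x : E} (hf : DifferentiableAt ℝ f x) (hg : DifferentiableAt ℝ g x)
    (hgx : 0 < g x) (s : ℝ) :
    ‖fderiv ℝ (fun y => f y * g y ^ s) x‖ ≤
      g x ^ s * ‖fderiv ℝ f x‖ + |s| * g x ^ (s - 1) * ‖fderiv ℝ g x‖ * |f x| := by
  have hfgs : HasFDerivAt (fun y => f y * g y ^ s) _ x :=
    hf.hasFDerivAt.mul (hg.hasFDerivAt.rpow_const (p := s) (Or.inl hgx.ne'))
  rw [hfgs.fderiv]
  calc ‖f x • (s * g x ^ (s - 1)) • fderiv ℝ g x + g x ^ s • fderiv ℝ f x‖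
      ≤ |f x| * (|s| * g x ^ (s - 1) * ‖fderiv ℝ g x‖) + g x ^ s * ‖fderiv ℝ f x‖ := by
        refine (norm_add_le _ _).trans_eq ?_
        rw [norm_smul, norm_smul, norm_smul, Real.norm_eq_abs, Real.norm_eq_abs,
          Real.norm_eq_abs, abs_mul, abs_of_pos (Real.rpow_pos_of_pos hgx _),
          abs_of_pos (Real.rpow_pos_of_pos hgx _)]
    _ = _ := by ring

lemma lintegral_ofReal_lt_top_of_continuousOn {X : Type*} [TopologicalSpace X] [T2Space X]
    [MeasurableSpace X] [OpensMeasurableSpace X] {μ : Measure X} [IsFiniteMeasureOnCompacts μ]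
    {f : X → ℝ} {K : Set X} (hK : IsCompact K) (hf : ContinuousOn f K)
    (hfK : Function.support f ⊆ K) : ∫⁻ x, ENNReal.ofReal (f x) ∂μ < ⊤ := by
  rw [← Set.indicator_eq_self.2 hfK]
  exact ((hf.integrableOn_compact hK).integrable_indicator hK.measurableSet).lintegral_lt_top

lemma IsOpen.infDist_compl_pos {X : Type*} [PseudoMetricSpace X] {Ω : Set X} (hΩ : IsOpen Ω)
    (hΩc : Ωᶜ.Nonempty) {x : X} (hx : x ∈ Ω) : 0 < infDist x Ωᶜ :=
  (hΩ.isClosed_compl.notMem_iff_infDist_pos hΩc).1 (not_not_intro hx)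

lemma setLIntegral_rpow_mul_infDist_rpow_lt_top {X : Type*} [MetricSpace X] [MeasurableSpace X]
    [OpensMeasurableSpace X] {μ : Measure X} [IsFiniteMeasureOnCompacts μ] {Ω : Set X} {p : ℝ}
    (hp : 0 < p) (hΩ : IsOpen Ω) (hΩc : Ωᶜ.Nonempty) {u : X → ℝ} (hu : Continuous u)
    (hcs : HasCompactSupport u) (huΩ : tsupport u ⊆ Ω) (γ : ℝ) :
    ∫⁻ x in Ω, ENNReal.ofReal (|u x| ^ p * infDist x Ωᶜ ^ γ) ∂μ < ⊤ := by
  refine (setLIntegral_le_lintegral _ _).trans_lt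
    (lintegral_ofReal_lt_top_of_continuousOn hcs ?_ fun x hx => subset_tsupport u fun hux => ?_)
  · exact (hu.abs.rpow_const fun _ => Or.inr hp.le).continuousOn.mul
      ((continuous_infDist_pt Ωᶜ).continuousOn.rpow_const fun x hx =>
        Or.inl (hΩ.infDist_compl_pos hΩc (huΩ hx)).ne')
  · exact hx (by simp [hux, hp.ne'])

lemma lintegral_norm_fderiv_mul_infDist_rpow_le {E : Type*} [NormedAddCommGroup E]
    [NormedSpace ℝ E] [FiniteDimensional ℝ E] [MeasurableSpace E] [BorelSpace E] {μ : Measure E}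
    [μ.IsAddHaarMeasure] {Ω : Set E} {p : ℝ} (hp : 1 ≤ p) (hΩ : IsOpen Ω) (hΩc : Ωᶜ.Nonempty) {u : E → ℝ} {K : NNReal} (hu : LipschitzWith K u) {s β β' : ℝ}
    (hs : s * p = β' - β) :
    ∫⁻ x in Ω, ENNReal.ofReal
        (‖fderiv ℝ (fun y => u y * infDist y Ωᶜ ^ s) x‖ ^ p * infDist x Ωᶜ ^ β) ∂μ ≤
      ENNReal.ofReal (2 ^ (p - 1)) *
        (∫⁻ x in Ω, ENNReal.ofReal (‖fderiv ℝ u x‖ ^ p * infDist x Ωᶜ ^ β') ∂μ +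
          ENNReal.ofReal (|s| ^ p) *
            ∫⁻ x in Ω, ENNReal.ofReal (|u x| ^ p * infDist x Ωᶜ ^ (β' - p)) ∂μ) := by
  have hd := lipschitz_infDist_pt (α := E) Ωᶜ
  have hpt : ∀ᵐ x ∂μ.restrict Ω,
      ENNReal.ofReal (‖fderiv ℝ (fun y => u y * infDist y Ωᶜ ^ s) x‖ ^ p * infDist x Ωᶜ ^ β) ≤
        ENNReal.ofReal (2 ^ (p - 1)) * (ENNReal.ofReal (‖fderiv ℝ u x‖ ^ p * infDist x Ωᶜ ^ β') +
          ENNReal.ofReal (|s| ^ p) * ENNReal.ofReal (|u x| ^ p * infDist x Ωᶜ ^ (β' - p))) := by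
    filter_upwards [ae_restrict_of_ae hu.ae_differentiableAt,
      ae_restrict_of_ae hd.ae_differentiableAt, ae_restrict_mem hΩ.measurableSet]
      with x hux hdx hx
    have hdx0 := hΩ.infDist_compl_pos hΩc hx
    have hgrad : ‖fderiv ℝ (fun y => u y * infDist y Ωᶜ ^ s) x‖ ≤
        infDist x Ωᶜ ^ s * ‖fderiv ℝ u x‖ + |s| * infDist x Ωᶜ ^ (s - 1) * |u x| := by
      refine (norm_fderiv_mul_rpow_le hux hdx hdx0 s).trans ?_
      have hd1 : ‖fderiv ℝ (fun y => infDist y Ωᶜ) x‖ ≤ 1 := by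
        simpa using norm_fderiv_le_of_lipschitz ℝ hd
      gcongr _ + ?_ * _
      exact mul_le_of_le_one_right (by positivity) hd1
    rw [← ENNReal.ofReal_mul (by positivity), ← ENNReal.ofReal_add (by positivity)
      (by positivity), ← ENNReal.ofReal_mul (by positivity)]
    refine ENNReal.ofReal_le_ofReal (le_trans ?_
      (rpow_add_mul_rpow_le hdx0 (norm_nonneg _) (abs_nonneg _) hp hs))
    gcongr
  refine (lintegral_mono_ae hpt).trans_eq ?_
  rw [lintegral_const_mul' _ _ ofReal_ne_top, lintegral_add_left' ?_,
    lintegral_const_mul' _ _ ofReal_ne_top]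
  exact (((measurable_fderiv ℝ u).norm.pow_const p).mul
    (hd.continuous.measurable.pow_const β')).ennreal_ofReal.aemeasurable

section

variable {E : Type*} [NormedAddCommGroup E] [NormedSpace ℝ E] [MeasurableSpace E]

def HardyInequality (μ : Measure E) (Ω : Set E) (p β C : ℝ) : Prop :=
  ∀ u : E → ℝ, (∃ L : NNReal, LipschitzWith L u) → HasCompactSupport u → tsupport u ⊆ Ω →
    ∫⁻ x in Ω, ENNReal.ofReal (|u x| ^ p * infDist x Ωᶜ ^ (β - p)) ∂μ ≤
      ENNReal.ofReal C * ∫⁻ x in Ω, ENNReal.ofReal (‖fderiv ℝ u x‖ ^ p * infDist x Ωᶜ ^ β) ∂μ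

namespace HardyInequality

variable {μ : Measure E} {Ω : Set E} {p β C : ℝ}

theorem mono (h : HardyInequality μ Ω p β C) {C' : ℝ} (hC : C ≤ C') :
    HardyInequality μ Ω p β C' :=
  fun u hu hcs huΩ => (h u hu hcs huΩ).trans (by gcongr)

variable [FiniteDimensional ℝ E] [BorelSpace E] [μ.IsAddHaarMeasure]

theorem of_near_exponent (h : HardyInequality μ Ω p β C) (hp : 1 ≤ p) (hΩ : IsOpen Ω)
    (hΩc : Ωᶜ.Nonempty) (hC : 0 ≤ C) {β' : ℝ} (hβ' : C * (2 * |β' - β| / p) ^ p ≤ 1) :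
    HardyInequality μ Ω p β' (2 ^ p * C) := by
  rintro u ⟨Ku, hu⟩ hcs huΩ
  have hp0 : 0 < p := by linarith
  set s := (β' - β) / p
  have hs : s * p = β' - β := div_mul_cancel₀ _ hp0.ne'
  set A := ∫⁻ x in Ω, ENNReal.ofReal (|u x| ^ p * infDist x Ωᶜ ^ (β' - p)) ∂μ
  set B := ∫⁻ x in Ω, ENNReal.ofReal (‖fderiv ℝ u x‖ ^ p * infDist x Ωᶜ ^ β') ∂μ
  obtain ⟨Kw, hw⟩ := hu.exists_lipschitzWith_mul_rpow hcs (lipschitz_infDist_pt Ωᶜ)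
    (fun x hx => hΩ.infDist_compl_pos hΩc (huΩ hx)) s
  have hHardy_w := h _ ⟨Kw, hw⟩ hcs.mul_right (tsupport_mul_subset_left.trans huΩ)
  have hA : ∫⁻ x in Ω, ENNReal.ofReal
      (|u x * infDist x Ωᶜ ^ s| ^ p * infDist x Ωᶜ ^ (β - p)) ∂μ = A := by
    refine setLIntegral_congr_fun hΩ.measurableSet fun x hx => ?_
    have hdx := hΩ.infDist_compl_pos hΩc hx
    rw [abs_mul, abs_of_pos (Real.rpow_pos_of_pos hdx _),
      mul_rpow_rpow_mul_rpow (abs_nonneg _) hdx, hs, sub_add_sub_cancel]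
  have hsmall : C * 2 ^ (p - 1) * |s| ^ p ≤ 1 / 2 := by
    rw [show 2 * |β' - β| / p = 2 * |s| by rw [abs_div, abs_of_pos hp0]; ring,
      Real.mul_rpow zero_le_two (abs_nonneg _)] at hβ'
    rw [Real.rpow_sub_one two_ne_zero]
    linarith
  have h2 : (0 : ℝ) ≤ 2 ^ (p - 1) := by positivity
  have hA_le : A ≤ ENNReal.ofReal (C * 2 ^ (p - 1)) * B +
      ENNReal.ofReal (C * 2 ^ (p - 1) * |s| ^ p) * A := calc
    A ≤ ENNReal.ofReal C *
        (ENNReal.ofReal (2 ^ (p - 1)) * (B + ENNReal.ofReal (|s| ^ p) * A)) :=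
      (hA ▸ hHardy_w).trans
        (by gcongr; exact lintegral_norm_fderiv_mul_infDist_rpow_le (μ := μ) hp hΩ hΩc hu hs)
    _ = _ := by
      rw [ENNReal.ofReal_mul (mul_nonneg hC h2), ENNReal.ofReal_mul hC]
      ring
  have hAfin := setLIntegral_rpow_mul_infDist_rpow_lt_top (μ := μ) hp0 hΩ hΩc hu.continuous hcs
    huΩ (β' - p)
  calc A ≤ ENNReal.ofReal (2 * (C * 2 ^ (p - 1))) * B :=
      ENNReal.le_ofReal_two_mul_of_le_add hAfin.ne hsmall hA_le
    _ = ENNReal.ofReal (2 ^ p * C) * B := by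
      rw [Real.rpow_sub_one two_ne_zero]
      congr 2
      field_simp

end HardyInequality

end

theorem hardy_self_improvement_general
    (n : ℕ) (p β : ℝ) (hp : 1 ≤ p)
    (Ω : Set (EuclideanSpace ℝ (Fin n))) (hΩopen : IsOpen Ω) (hΩc : Ωᶜ.Nonempty)
    (C₀ : ℝ)
    (hHardy : ∀ u : EuclideanSpace ℝ (Fin n) → ℝ,
      (∃ L : NNReal, LipschitzWith L u) → HasCompactSupport u → tsupport u ⊆ Ω →
      ∫⁻ x in Ω, ENNReal.ofReal (|u x| ^ p * Metric.infDist x Ωᶜ ^ (β - p)) ≤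
        ENNReal.ofReal C₀ *
          ∫⁻ x in Ω, ENNReal.ofReal (‖fderiv ℝ u x‖ ^ p * Metric.infDist x Ωᶜ ^ β)) :
    ∃ ε : ℝ, 0 < ε ∧ ∃ C : ℝ, 0 < C ∧
      ∀ β' : ℝ, β - ε ≤ β' → β' ≤ β + ε →
        ∀ u : EuclideanSpace ℝ (Fin n) → ℝ,
          (∃ L : NNReal, LipschitzWith L u) → HasCompactSupport u → tsupport u ⊆ Ω →
          ∫⁻ x in Ω, ENNReal.ofReal (|u x| ^ p * Metric.infDist x Ωᶜ ^ (β' - p)) ≤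
            ENNReal.ofReal C *
              ∫⁻ x in Ω, ENNReal.ofReal (‖fderiv ℝ u x‖ ^ p * Metric.infDist x Ωᶜ ^ β') := by
  set M := max C₀ 1
  have hM : 1 ≤ M := le_max_right _ _
  have hp0 : 0 < p := by linarith
  have hH : HardyInequality volume Ω p β M := HardyInequality.mono hHardy (le_max_left _ _)
  refine ⟨p / (2 * M), by positivity, 2 ^ p * M, by positivity, fun β' h₁ h₂ => ?_⟩
  refine hH.of_near_exponent hp hΩopen hΩc (by positivity) ?_
  have ht₀ : 0 ≤ 2 * |β' - β| / p := by positivity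
  have ht : 2 * |β' - β| / p ≤ 1 / M := calc
    _ ≤ 2 * (p / (2 * M)) / p := by gcongr; exact abs_sub_le_iff.2 ⟨by linarith, by linarith⟩
    _ = 1 / M := by field_simp
  calc M * (2 * |β' - β| / p) ^ p ≤ M * (2 * |β' - β| / p) := by
        gcongr
        exact Real.rpow_le_self_of_le_one ht₀ (ht.trans (by simp [inv_le_one_of_one_le₀ hM])) hp
    _ ≤ M * (1 / M) := by gcongr
    _ = 1 := by field_simp

/-- Euclidean case of Proposition 6.3: a `(p,β)`-Hardy inequality is
self-improving in the exponent `β`: there are `ε > 0` and `C > 0` such that `Ω` admits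
the `(p,β')`-Hardy inequality with constant `C` for every `β' ∈ [β - ε, β + ε]`. -/
theorem hardy_self_improvement
    (n : ℕ) (hn : 1 ≤ n) (p β : ℝ) (hp : 1 ≤ p)
    (Ω : Set (EuclideanSpace ℝ (Fin n))) (hΩopen : IsOpen Ω) (hΩc : Ωᶜ.Nonempty)
    (C₀ : ℝ)
    (hHardy : ∀ u : EuclideanSpace ℝ (Fin n) → ℝ,
      (∃ L : NNReal, LipschitzWith L u) → HasCompactSupport u → tsupport u ⊆ Ω →
      ∫⁻ x in Ω, ENNReal.ofReal (|u x| ^ p * Metric.infDist x Ωᶜ ^ (β - p)) ≤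
        ENNReal.ofReal C₀ *
          ∫⁻ x in Ω, ENNReal.ofReal (‖fderiv ℝ u x‖ ^ p * Metric.infDist x Ωᶜ ^ β)) :
    ∃ ε : ℝ, 0 < ε ∧ ∃ C : ℝ, 0 < C ∧
      ∀ β' : ℝ, β - ε ≤ β' → β' ≤ β + ε →
        ∀ u : EuclideanSpace ℝ (Fin n) → ℝ,
          (∃ L : NNReal, LipschitzWith L u) → HasCompactSupport u → tsupport u ⊆ Ω →
          ∫⁻ x in Ω, ENNReal.ofReal (|u x| ^ p * Metric.infDist x Ωᶜ ^ (β' - p)) ≤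
            ENNReal.ofReal C *
              ∫⁻ x in Ω, ENNReal.ofReal (‖fderiv ℝ u x‖ ^ p * Metric.infDist x Ωᶜ ^ β') :=
  hardy_self_improvement_general n p β hp Ω hΩopen hΩc C₀ hHardy
end
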